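/- arXiv:2402.13944 — 4 statements merged into one kernel-verified Lean document; each statement's English description precedes it below -/
import Mathlib

section
/- Every infinite finitely generated group G admits a finite symmetric generating set S such that the skeleton X^s_{G,S} is not sofic. -/
/-- `w` is a word over the alphabet `S`. -/
def WordIn {G : Type*} [Group G] (S : Finset G) (w : List G) : Prop := ∀ a ∈ w, a ∈ S

/-- The word problem of `G` w.r.t. `S`: nonempty words over `S` evaluating to `1`. -/
def WP {G : Type*} [Group G] (S : Finset G) (w : List G) : Prop :=
  WordIn S w ∧ w ≠ [] ∧ w.prod = 1

/-- `w` is a factor of the configuration `x`. -/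
def IsFactorOf {G : Type*} [Group G] (w : List G) (x : ℤ → G) : Prop :=
  ∃ i : ℤ, w = (List.range w.length).map fun k => x (i + k)

/-- The skeleton of `G` w.r.t. `S`: configurations with values in `S`,
no factor of which lies in `WP G S`. -/
def Skeleton {G : Type*} [Group G] (S : Finset G) : Set (ℤ → G) :=
  {x | (∀ i, x i ∈ S) ∧ ∀ w, IsFactorOf w x → ¬ WP S w}

/-- `S` is a finite symmetric generating set of `G`. -/
def IsSymmGen {G : Type*} [Group G] (S : Finset G) : Prop :=
  (∀ s ∈ S, s⁻¹ ∈ S) ∧ (1 : G) ∉ S ∧ Subgroup.closure (S : Set G) = ⊤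

/-- A language is regular if it is recognized by a deterministic finite automaton
with finitely many states. -/
def IsRegularLang {α : Type*} (L : Set (List α)) : Prop :=
  ∃ (σ : Type) (_ : Fintype σ) (M : DFA α σ), ∀ w, w ∈ M.accepts ↔ w ∈ L

/-- The skeleton is sofic: it is cut out by a regular language of
forbidden nonempty words over `S`. -/
def SkeletonIsSofic {G : Type*} [Group G] (S : Finset G) : Prop :=
  ∃ F : Set (List G), (∀ w ∈ F, w ≠ [] ∧ WordIn S w) ∧ IsRegularLang F ∧
    Skeleton S = {x | (∀ i, x i ∈ S) ∧ ∀ w ∈ F, ¬ IsFactorOf w x}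

set_option linter.unusedSectionVars false
set_option maxHeartbeats 1000000

namespace SkelAux

lemma flat_sing : ∀ l : List ℕ, (l.flatMap fun (a:ℕ) => [(a:ℤ)]) = l.map Int.ofNat
  | [] => rfl
  | a :: l => by rw [List.flatMap_cons, List.map_cons, flat_sing l]; rfl

variable {G : Type*} [Group G]

/-- the window of `x` of length `n` starting at `i` -/
def win (x : ℤ → G) (i : ℤ) (n : ℕ) : List G := (List.range n).map (fun k : ℕ => x (i + (k:ℤ)))

@[simp] lemma win_length (x : ℤ → G) (i : ℤ) (n : ℕ) : (win x i n).length = n := by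
  rw [win, List.length_map, List.length_range]

@[simp] lemma win_zero (x : ℤ → G) (i : ℤ) : win x i 0 = [] := rfl

lemma win_succ (x : ℤ → G) (i : ℤ) (n : ℕ) :
    win x i (n + 1) = win x i n ++ [x (i + n)] := by
  simp [win, List.range_succ]

lemma win_append (x : ℤ → G) (i : ℤ) (m n : ℕ) :
    win x i (m + n) = win x i m ++ win x (i + m) n := by
  induction n with
  | zero => simp
  | succ n ih =>
      rw [show m + (n+1) = (m+n)+1 from rfl, win_succ, ih, win_succ, List.append_assoc]
      congr 3
      push_cast; ring

lemma isFactorOf_win (x : ℤ → G) (i : ℤ) (n : ℕ) : IsFactorOf (win x i n) x := by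
  refine ⟨i, ?_⟩
  rw [win_length]
  show win x i n = List.map (fun (k:ℤ) => x (i + k)) ((List.range n).flatMap fun (a:ℕ) => [(a:ℤ)])
  rw [win, flat_sing (List.range n), List.map_map]
  rfl

lemma factor_eq_win {w : List G} {x : ℤ → G} (h : IsFactorOf w x) :
    ∃ i, w = win x i w.length := by
  obtain ⟨i, hi⟩ := h
  refine ⟨i, ?_⟩
  conv_lhs => rw [hi]
  show List.map (fun (k:ℤ) => x (i + k)) ((List.range w.length).flatMap fun (a:ℕ) => [(a:ℤ)]) = _
  rw [win, flat_sing, List.map_map]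
  rfl

lemma win_congr {x y : ℤ → G} {i j : ℤ} {n : ℕ} (h : ∀ k : ℕ, k < n → x (i + k) = y (j + k)) :
    win x i n = win y j n := by
  unfold win
  apply List.map_congr_left
  intro a ha
  exact h a (List.mem_range.mp ha)

lemma win_wordIn {S : Finset G} {x : ℤ → G} (hx : ∀ j, x j ∈ S) (i : ℤ) (n : ℕ) :
    WordIn S (win x i n) := by
  intro a ha
  unfold win at ha
  obtain ⟨k, _, rfl⟩ := List.mem_map.mp ha
  exact hx _

lemma win_prod_zpow (t : G) (V : ℤ → ℤ) (x : ℤ → G)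
    (hx : ∀ j, x j = t ^ (V (j+1) - V j)) (i : ℤ) (n : ℕ) :
    (win x i n).prod = t ^ (V (i + n) - V i) := by
  induction n with
  | zero => simp
  | succ n ih =>
      rw [win_succ, List.prod_append, ih, List.prod_singleton, hx, ← zpow_add]
      congr 1
      push_cast; ring

lemma zpow_eq_zero_exp {t : G} (ht : ¬ IsOfFinOrder t) {m : ℤ}
    (hm : t ^ m = 1) : m = 0 := by
  by_contra h0
  apply ht
  rw [isOfFinOrder_iff_pow_eq_one]
  refine ⟨m.natAbs, by omega, ?_⟩
  rcases Int.natAbs_eq m with h | h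
  · rw [← zpow_natCast, ← h, hm]
  · rw [← zpow_natCast, show (m.natAbs : ℤ) = -m by omega, zpow_neg, hm, inv_one]

section DFAPart

variable {σ : Type} (M : DFA G σ)

def Rset (z : ℤ → G) (j : ℤ) : Set σ :=
  {s | ∃ i ≤ j, s = M.evalFrom M.start (win z i (j - i).toNat)}

lemma self_mem_Rset (z : ℤ → G) {i j : ℤ} (hij : i ≤ j) :
    M.evalFrom M.start (win z i (j - i).toNat) ∈ Rset M z j := ⟨i, hij, rfl⟩

lemma notF_of_eval {F : Set (List G)} (hM : ∀ w, w ∈ M.accepts ↔ w ∈ F)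
    {z : ℤ → G} (hzF : ∀ i n, win z i n ∉ F) {w : List G}
    (h : ∃ i' m', M.evalFrom M.start w = M.evalFrom M.start (win z i' m')) : w ∉ F := by
  intro hw
  obtain ⟨i', m', heq⟩ := h
  have hacc : M.eval w ∈ M.accept := (DFA.mem_accepts M).mp ((hM w).mpr hw)
  have : M.eval (win z i' m') ∈ M.accept := by
    show M.evalFrom M.start _ ∈ M.accept
    rw [← heq]; exact hacc
  exact hzF i' m' ((hM _).mp ((DFA.mem_accepts M).mpr this))

/-- splicing in an extra copy of a loop segment keeps all factors safe -/
lemma splice_safe {F : Set (List G)} (hM : ∀ w, w ∈ M.accepts ↔ w ∈ F)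
    {z : ℤ → G} (hzF : ∀ i n, win z i n ∉ F)
    {p q : ℤ} (hpq : p < q) (hR : Rset M z p = Rset M z q)
    (x : ℤ → G) (hx1 : ∀ j, j < q → x j = z j)
    (hx2 : ∀ j, q ≤ j → x j = z (j - (q - p))) :
    ∀ i n, win x i n ∉ F := by
  intro i n
  rcases le_or_gt (i + n) q with hc1 | hc1
  · have : win x i n = win z i n := win_congr (fun k hk => hx1 _ (by omega))
    rw [this]; exact hzF i n
  rcases le_or_gt q i with hc2 | hc2
  · have : win x i n = win z (i - (q - p)) n := by
      apply win_congr
      intro k hk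
      rw [hx2 _ (by omega)]
      congr 1
      ring
    rw [this]; exact hzF _ n
  · have hn1 : ((q - i).toNat : ℤ) = q - i := by omega
    set n1 : ℕ := (q - i).toNat with hn1def
    have hn1n : n1 ≤ n := by omega
    have hsplit : win x i n = win x i n1 ++ win x (i + n1) (n - n1) := by
      rw [← win_append]
      congr 1
      omega
    have h1 : win x i n1 = win z i n1 := win_congr (fun k hk => hx1 _ (by omega))
    have h2 : win x (i + n1) (n - n1) = win z p (n - n1) := by
      apply win_congr
      intro k hk
      rw [hx2 _ (by omega)]
      congr 1
      omega
    have hmem : M.evalFrom M.start (win z i (q - i).toNat) ∈ Rset M z p := by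
      rw [hR]; exact self_mem_Rset M z (by omega)
    obtain ⟨i', hi', heq⟩ := hmem
    apply notF_of_eval M hM hzF
    refine ⟨i', (p - i').toNat + (n - n1), ?_⟩
    rw [hsplit, h1, h2, DFA.evalFrom_of_append, win_append,
      show i' + (((p - i').toNat : ℕ) : ℤ) = p by omega, DFA.evalFrom_of_append, ← heq]

lemma add_emod_self (a b : ℤ) : (a + b) % b = a % b := by
  rw [Int.add_emod, Int.emod_self, add_zero, Int.emod_emod_of_dvd _ dvd_rfl]

lemma here_agree {z x : ℤ → G} {c d : ℤ} (hcd : c < d)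
    (hxdef : ∀ j, x j = z (c + (j - c) % (d - c))) :
    ∀ j, c ≤ j → j < d → x j = z j := by
  intro j h1 h2
  rw [hxdef]
  congr 1
  rw [Int.emod_eq_of_lt (by omega) (by omega)]
  ring

lemma here_shift {z x : ℤ → G} {c d : ℤ} (hcd : c < d)
    (hxdef : ∀ j, x j = z (c + (j - c) % (d - c))) :
    ∀ j, x (j + (d - c)) = x j := by
  intro j
  rw [hxdef, hxdef]
  congr 2
  rw [show j + (d - c) - c = (j - c) + (d - c) by ring, add_emod_self]

/-- the key recursion for the periodic configuration -/
lemma claimA {z : ℤ → G} {c d : ℤ} (hcd : c < d) (hR : Rset M z c = Rset M z d)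
    (x : ℤ → G) (hxdef : ∀ j, x j = z (c + (j - c) % (d - c))) :
    ∀ n : ℕ, ∀ s ∈ Rset M z c, ∃ i' m', M.evalFrom s (win x c n) = M.evalFrom M.start (win z i' m') := by
  have hr : (0:ℤ) < d - c := by omega
  have hagree := here_agree hcd hxdef
  have hshift := here_shift hcd hxdef
  intro n
  induction n using Nat.strong_induction_on with
  | _ n ih =>
    intro s hs
    obtain ⟨i1, hi1, hseq⟩ := hs
    rcases le_or_gt n (d - c).toNat with hcase | hcase
    · refine ⟨i1, (c - i1).toNat + n, ?_⟩
      have hxz : win x c n = win z c n := win_congr (fun k hk => hagree _ (by omega) (by omega))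
      rw [hxz, hseq, win_append, show i1 + (((c - i1).toNat : ℕ) : ℤ) = c by omega,
        DFA.evalFrom_of_append]
    · have e0 : n = (d - c).toNat + (n - (d - c).toNat) := by omega
      have h1 : win x c n = win x c (d - c).toNat ++ win x (c + (((d - c).toNat : ℕ) : ℤ)) (n - (d - c).toNat) := by
        conv_lhs => rw [e0]
        exact win_append x c _ _
      have h2 : win x c (d - c).toNat = win z c (d - c).toNat :=
        win_congr (fun k hk => hagree _ (by omega) (by omega))
      have h3 : win x (c + (((d - c).toNat : ℕ) : ℤ)) (n - (d - c).toNat) = win x c (n - (d - c).toNat) := by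
        apply win_congr
        intro k hk
        rw [show c + (((d - c).toNat : ℕ) : ℤ) + k = (c + k) + (d - c) by omega, hshift]
      have hcomb : win z i1 (d - i1).toNat = win z i1 (c - i1).toNat ++ win z c (d - c).toNat := by
        have e2 : i1 + (((c - i1).toNat : ℕ) : ℤ) = c := by omega
        rw [show (d - i1).toNat = (c - i1).toNat + (d - c).toNat by omega, win_append, e2]
      have hs' : M.evalFrom s (win z c (d - c).toNat) ∈ Rset M z c := by
        rw [hR, hseq, ← DFA.evalFrom_of_append, ← hcomb]
        exact self_mem_Rset M z (by omega)
      obtain ⟨i', m', h'⟩ := ih (n - (d - c).toNat) (by omega) _ hs'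
      refine ⟨i', m', ?_⟩
      rw [h1, h2, h3, DFA.evalFrom_of_append, h']

/-- the periodisation of a loop segment keeps all factors safe -/
lemma periodic_safe {F : Set (List G)} (hM : ∀ w, w ∈ M.accepts ↔ w ∈ F)
    {z : ℤ → G} (hzF : ∀ i n, win z i n ∉ F)
    {c d : ℤ} (hcd : c < d) (hR : Rset M z c = Rset M z d)
    (x : ℤ → G) (hxdef : ∀ j, x j = z (c + (j - c) % (d - c))) :
    ∀ i n, win x i n ∉ F := by
  have hr : (0:ℤ) < d - c := by omega
  have hagree := here_agree hcd hxdef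
  have hshift := here_shift hcd hxdef
  intro i n
  set i0 : ℤ := c + (i - c) % (d - c) with hi0
  have hi0a : c ≤ i0 := by
    have := Int.emod_nonneg (i - c) (by omega : (d - c) ≠ 0)
    omega
  have hi0b : i0 < d := by
    have := Int.emod_lt_of_pos (i - c) hr
    omega
  have hws : win x i n = win x i0 n := by
    apply win_congr
    intro k hk
    rw [hxdef, hxdef]
    congr 2
    rw [show i0 + k - c = (i - c) % (d - c) + k by omega, Int.emod_add_emod,
      show i - c + k = i + k - c by ring]
  rcases le_or_gt n (d - i0).toNat with hcase | hcase
  · have hxz : win x i0 n = win z i0 n :=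
      win_congr (fun k hk => hagree _ (by omega) (by omega))
    rw [hws, hxz]
    exact hzF i0 n
  · have e0 : n = (d - i0).toNat + (n - (d - i0).toNat) := by omega
    have h1 : win x i0 n = win x i0 (d - i0).toNat ++ win x (i0 + (((d - i0).toNat : ℕ) : ℤ)) (n - (d - i0).toNat) := by
      conv_lhs => rw [e0]
      exact win_append x i0 _ _
    have h2 : win x i0 (d - i0).toNat = win z i0 (d - i0).toNat :=
      win_congr (fun k hk => hagree _ (by omega) (by omega))
    have h3 : win x (i0 + (((d - i0).toNat : ℕ) : ℤ)) (n - (d - i0).toNat) = win x c (n - (d - i0).toNat) := by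
      apply win_congr
      intro k hk
      rw [show i0 + (((d - i0).toNat : ℕ) : ℤ) + k = (c + k) + (d - c) by omega, hshift]
    have hs0 : M.evalFrom M.start (win z i0 (d - i0).toNat) ∈ Rset M z c := by
      rw [hR]
      exact self_mem_Rset M z (by omega)
    obtain ⟨i', m', h'⟩ := claimA M hcd hR x hxdef (n - (d - i0).toNat) _ hs0
    apply notF_of_eval M hM hzF
    refine ⟨i', m', ?_⟩
    rw [hws, h1, h2, h3, DFA.evalFrom_of_append, h']

end DFAPart

/-! ### Case B : an element of infinite order -/

def Wfun (N : ℤ) (j : ℤ) : ℤ :=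
  if j ≤ 0 then 3*j else if j ≤ N then 2*j else if j ≤ 2*N+1 then 4*N+1-2*j else 6*N+4-3*j

lemma Wfun_inj {N : ℤ} (hN : 1 ≤ N) {a b : ℤ} (hab : Wfun N a = Wfun N b) : a = b := by
  unfold Wfun at hab
  split_ifs at hab <;> omega

lemma Wfun_step {N : ℤ} (hN : 1 ≤ N) (j : ℤ) :
    Wfun N (j+1) - Wfun N j = 3 ∨ Wfun N (j+1) - Wfun N j = 2 ∨ Wfun N (j+1) - Wfun N j = -1 ∨
    Wfun N (j+1) - Wfun N j = -2 ∨ Wfun N (j+1) - Wfun N j = -3 := by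
  unfold Wfun
  split_ifs <;> omega

lemma caseB {G : Type*} [Group G] {t : G} (ht : ¬ IsOfFinOrder t) {S : Finset G}
    (htS : ∀ k : ℤ, (k = 3 ∨ k = 2 ∨ k = -1 ∨ k = -2 ∨ k = -3) → t ^ k ∈ S) :
    ¬ SkeletonIsSofic S := by
  rintro ⟨F, hFprop, ⟨σ, instσ, M, hM⟩, hEq⟩
  classical
  haveI := instσ
  haveI : Fintype (Set σ) := Fintype.ofFinite _
  set Nn : ℕ := Fintype.card (Set σ) with hNn
  have hNpos : 0 < Nn := Fintype.card_pos_iff.mpr ⟨(∅ : Set σ)⟩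
  set N : ℤ := (Nn : ℤ) with hNdef
  have hN : 1 ≤ N := by omega
  set z : ℤ → G := fun j => t ^ (Wfun N (j+1) - Wfun N j) with hzdef
  have hzval : ∀ j, z j ∈ S := fun j => htS _ (Wfun_step hN j)
  -- z is in the skeleton
  have hzskel : z ∈ Skeleton S := by
    refine ⟨hzval, ?_⟩
    intro w hw hWP
    obtain ⟨_, hne, hprod⟩ := hWP
    obtain ⟨i, hi⟩ := factor_eq_win hw
    rw [hi, win_prod_zpow t (Wfun N) z (fun j => rfl)] at hprod
    have h0 := zpow_eq_zero_exp ht hprod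
    have h1 : i + (w.length : ℤ) = i := Wfun_inj hN (by omega)
    have : w.length = 0 := by omega
    exact hne (List.length_eq_zero_iff.mp this)
  -- factors of z avoid F
  have hzF : ∀ i n, win z i n ∉ F := by
    intro i n hmem
    have hz2 := hEq ▸ hzskel
    exact hz2.2 _ hmem (isFactorOf_win z i n)
  -- pigeonhole on the R-sets along the b-block
  obtain ⟨p', q', hpq', hReq⟩ :
      ∃ p' q' : Fin (Nn+1), p' < q' ∧ Rset M z ((p' : ℕ) : ℤ) = Rset M z ((q' : ℕ) : ℤ) := by
    obtain ⟨a, b, hab, hfeq⟩ := Fintype.exists_ne_map_eq_of_card_lt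
      (fun k : Fin (Nn+1) => Rset M z ((k : ℕ) : ℤ)) (by rw [Fintype.card_fin]; omega)
    rcases hab.lt_or_gt with hlt | hlt
    · exact ⟨a, b, hlt, hfeq⟩
    · exact ⟨b, a, hlt, hfeq.symm⟩
  set p : ℤ := ((p' : ℕ) : ℤ) with hpdef
  set q : ℤ := ((q' : ℕ) : ℤ) with hqdef
  have hp0 : 0 ≤ p := Int.ofNat_nonneg _
  have hqN : q ≤ N := by
    have := q'.is_le
    omega
  have hpq : p < q := by
    have := (Fin.lt_iff_val_lt_val.mp hpq')
    omega
  -- the spliced configuration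
  set x : ℤ → G := fun j => if j < q then z j else z (j - (q - p)) with hxdef
  have hx1 : ∀ j, j < q → x j = z j := fun j hj => if_pos hj
  have hx2 : ∀ j, q ≤ j → x j = z (j - (q - p)) := fun j hj => if_neg (not_lt.mpr hj)
  have hsafe : ∀ i n, win x i n ∉ F := splice_safe M hM hzF hpq hReq x hx1 hx2
  have hxval : ∀ j, x j ∈ S := by
    intro j
    rw [hxdef]
    dsimp only
    split_ifs <;> exact hzval _
  have hxskel : x ∈ Skeleton S := by
    rw [hEq]
    refine ⟨hxval, ?_⟩
    intro w hw hfac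
    obtain ⟨i, hi⟩ := factor_eq_win hfac
    exact hsafe i w.length (hi ▸ hw)
  -- the spliced configuration has a trivial factor
  set r : ℤ := q - p with hrdef
  have hr1 : 1 ≤ r := by omega
  set W' : ℤ → ℤ := fun j => if j ≤ q then Wfun N j else Wfun N (j - r) + 2*r with hW'def
  have hWq : Wfun N q = 2*q := by unfold Wfun; split_ifs <;> omega
  have hWp : Wfun N (q - r) = 2*(q - r) := by unfold Wfun; split_ifs <;> omega
  have hxW : ∀ j, x j = t ^ (W' (j+1) - W' j) := by
    intro j
    rcases lt_or_ge j q with hj | hj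
    · rw [hx1 j hj, hW'def]
      dsimp only
      rw [if_pos (by omega : j ≤ q), if_pos (by omega : j + 1 ≤ q)]
    · rw [hx2 j hj, hW'def]
      dsimp only
      rw [if_neg (by omega : ¬ (j + 1 ≤ q))]
      rcases eq_or_lt_of_le hj with hjq | hjq
      · rw [if_pos (by omega : j ≤ q), ← hjq, hWq, hzdef]
        dsimp only
        congr 1
        rw [show q - r + 1 = q + 1 - r by ring]
        omega
      · rw [if_neg (by omega : ¬ (j ≤ q)), hzdef]
        dsimp only
        congr 1
        rw [show j - r + 1 = j + 1 - r by ring]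
        ring
  have hW'lo : W' (r - 1) = 2*r - 2 := by
    rw [hW'def]
    dsimp only
    rw [if_pos (by omega : r - 1 ≤ q)]
    unfold Wfun
    split_ifs <;> omega
  have hW'hi : W' (r - 1 + ((2*Nn+3 : ℕ) : ℤ)) = 2*r - 2 := by
    rw [hW'def]
    dsimp only
    rw [if_neg (by push_cast; omega : ¬ (r - 1 + ((2*Nn+3 : ℕ) : ℤ) ≤ q))]
    have : r - 1 + ((2*Nn+3 : ℕ) : ℤ) - r = 2*N+2 := by push_cast; omega
    rw [this]
    unfold Wfun
    split_ifs <;> omega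
  have hprod1 : (win x (r - 1) (2*Nn+3)).prod = 1 := by
    rw [win_prod_zpow t W' x hxW, hW'hi, hW'lo, sub_self, zpow_zero]
  -- contradiction
  have hbad : WP S (win x (r - 1) (2*Nn+3)) := by
    refine ⟨win_wordIn hxval _ _, ?_, hprod1⟩
    intro hnil
    have := congrArg List.length hnil
    rw [win_length] at this
    simp at this
  exact hxskel.2 _ (isFactorOf_win x (r-1) (2*Nn+3)) hbad

/-! ### Case A : torsion groups -/

section CaseA
variable [DecidableEq G]

variable {G : Type*} [Group G] [DecidableEq G]

def Pset (S : Finset G) : ℕ → Finset G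
  | 0 => {1}
  | (m+1) => Pset S m ∪ S.biUnion (fun s => (Pset S m).image (· * s))

variable {S : Finset G}

lemma one_mem_Pset (m : ℕ) : (1:G) ∈ Pset S m := by
  induction m with
  | zero => simp [Pset]
  | succ m ih => exact Finset.mem_union_left _ ih

lemma Pset_subset_succ (m : ℕ) : Pset S m ⊆ Pset S (m+1) := Finset.subset_union_left

lemma Pset_mono {m m' : ℕ} (h : m ≤ m') : Pset S m ⊆ Pset S m' := by
  induction m' with
  | zero => rw [Nat.le_zero.mp h]
  | succ m' ih =>
      rcases Nat.lt_or_ge m (m'+1) with h' | h'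
      · exact fun g hg => Pset_subset_succ m' (ih (by omega) hg)
      · rw [show m = m'+1 by omega]

lemma mul_mem_Pset_succ {g s : G} {m : ℕ} (hg : g ∈ Pset S m) (hs : s ∈ S) :
    g * s ∈ Pset S (m+1) := by
  apply Finset.mem_union_right
  rw [Finset.mem_biUnion]
  exact ⟨s, hs, Finset.mem_image.mpr ⟨g, hg, rfl⟩⟩

lemma Pset_succ_elim {g : G} {m : ℕ} (hg : g ∈ Pset S (m+1)) :
    g ∈ Pset S m ∨ ∃ g' s, g' ∈ Pset S m ∧ s ∈ S ∧ g = g' * s := by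
  rcases Finset.mem_union.mp hg with h | h
  · exact Or.inl h
  · right
    obtain ⟨s, hs, h2⟩ := Finset.mem_biUnion.mp h
    obtain ⟨g', hg', rfl⟩ := Finset.mem_image.mp h2
    exact ⟨g', s, hg', hs, rfl⟩

lemma left_mul_mem_Pset {m : ℕ} : ∀ {g s : G}, g ∈ Pset S m → s ∈ S → s * g ∈ Pset S (m+1) := by
  induction m with
  | zero =>
      intro g s hg hs
      have : g = 1 := by simpa [Pset] using hg
      subst this
      rw [mul_one, show s = 1 * s by rw [one_mul]]
      exact mul_mem_Pset_succ (one_mem_Pset 0) hs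
  | succ m ih =>
      intro g s hg hs
      rcases Pset_succ_elim hg with h | ⟨g', s', hg', hs', rfl⟩
      · exact Pset_subset_succ _ (ih h hs)
      · rw [← mul_assoc]
        exact mul_mem_Pset_succ (ih hg' hs) hs'

lemma inv_mem_Pset (hsym : ∀ s ∈ S, s⁻¹ ∈ S) {m : ℕ} :
    ∀ {g : G}, g ∈ Pset S m → g⁻¹ ∈ Pset S m := by
  induction m with
  | zero =>
      intro g hg
      have : g = 1 := by simpa [Pset] using hg
      simp [this, Pset]
  | succ m ih =>
      intro g hg
      rcases Pset_succ_elim hg with h | ⟨g', s', hg', hs', rfl⟩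
      · exact Pset_subset_succ _ (ih h)
      · rw [mul_inv_rev]
        exact left_mul_mem_Pset (ih hg') (hsym _ hs')

lemma mul_mem_Pset {a b : ℕ} : ∀ {g h : G}, g ∈ Pset S a → h ∈ Pset S b → g * h ∈ Pset S (a + b) := by
  induction b with
  | zero =>
      intro g h hg hh
      have : h = 1 := by simpa [Pset] using hh
      simpa [this] using hg
  | succ b ih =>
      intro g h hg hh
      rcases Pset_succ_elim hh with h' | ⟨h', s', hh', hs', rfl⟩
      · exact Pset_mono (by omega) (ih hg h')
      · rw [← mul_assoc]
        exact mul_mem_Pset_succ (ih hg hh') hs'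

lemma cover_Pset (hsym : ∀ s ∈ S, s⁻¹ ∈ S) (hgen : Subgroup.closure (S : Set G) = ⊤) (g : G) :
    ∃ m, g ∈ Pset S m := by
  have hmem : g ∈ Subgroup.closure (S : Set G) := by rw [hgen]; trivial
  induction hmem using Subgroup.closure_induction with
  | mem x hx =>
      refine ⟨1, ?_⟩
      rw [show x = 1 * x by rw [one_mul]]
      exact mul_mem_Pset_succ (one_mem_Pset 0) hx
  | one => exact ⟨0, one_mem_Pset 0⟩
  | mul x y hx hy ihx ihy =>
      obtain ⟨a, ha⟩ := ihx
      obtain ⟨b, hb⟩ := ihy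
      exact ⟨a + b, mul_mem_Pset ha hb⟩
  | inv x hx ihx =>
      obtain ⟨a, ha⟩ := ihx
      exact ⟨a, inv_mem_Pset hsym ha⟩

lemma word_of_Pset {m : ℕ} : ∀ {g : G}, g ∈ Pset S m →
    ∃ w : List G, WordIn S w ∧ w.length ≤ m ∧ w.prod = g := by
  induction m with
  | zero =>
      intro g hg
      have : g = 1 := by simpa [Pset] using hg
      exact ⟨[], by intro a ha; simp at ha, by simp, by simp [this]⟩
  | succ m ih =>
      intro g hg
      rcases Pset_succ_elim hg with h | ⟨g', s', hg', hs', rfl⟩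
      · obtain ⟨w, h1, h2, h3⟩ := ih h
        exact ⟨w, h1, by omega, h3⟩
      · obtain ⟨w, h1, h2, h3⟩ := ih hg'
        refine ⟨w ++ [s'], ?_, ?_, ?_⟩
        · intro a ha
          rcases List.mem_append.mp ha with h | h
          · exact h1 a h
          · rw [List.mem_singleton.mp h]; exact hs'
        · simp; omega
        · rw [List.prod_append, List.prod_singleton, h3]

lemma Pset_of_word : ∀ {w : List G}, WordIn S w → w.prod ∈ Pset S w.length := by
  intro w
  induction w using List.reverseRecOn with
  | nil => intro _; simp [one_mem_Pset]
  | append_singleton w s ih =>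
      intro hw
      rw [List.prod_append, List.prod_singleton, List.length_append, List.length_singleton]
      exact mul_mem_Pset_succ (ih (fun a ha => hw a (List.mem_append_left _ ha)))
        (hw s (List.mem_append_right _ (List.mem_singleton_self s)))

/-- a self-avoiding word of any prescribed length -/
lemma exists_SA_word [Infinite G] (hsym : ∀ s ∈ S, s⁻¹ ∈ S)
    (hgen : Subgroup.closure (S : Set G) = ⊤) (L : ℕ) :
    ∃ w : List G, WordIn S w ∧ w.length = L ∧
      ∀ w1 w2 w3 : List G, w = w1 ++ w2 ++ w3 → w2 ≠ [] → w2.prod ≠ 1 := by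
  obtain ⟨g, hg⟩ := Infinite.exists_notMem_finset (Pset S L)
  have hc : ∃ m, g ∈ Pset S m := cover_Pset hsym hgen g
  obtain ⟨w, hwIn, hwlen, hwprod⟩ := word_of_Pset (Nat.find_spec hc)
  have hLfind : L < Nat.find hc := by
    rcases Nat.lt_or_ge L (Nat.find hc) with h | h
    · exact h
    · exact absurd (Pset_mono h (Nat.find_spec hc)) hg
  have hSA : ∀ w1 w2 w3 : List G, w = w1 ++ w2 ++ w3 → w2 ≠ [] → w2.prod ≠ 1 := by
    intro w1 w2 w3 hsplit hne hprod
    have hIn' : WordIn S (w1 ++ w3) := by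
      intro a ha
      apply hwIn
      rw [hsplit]
      rcases List.mem_append.mp ha with h | h
      · exact List.mem_append_left _ (List.mem_append_left _ h)
      · exact List.mem_append_right _ h
    have hprod' : (w1 ++ w3).prod = g := by
      rw [List.prod_append, ← hwprod, hsplit, List.prod_append, List.prod_append, hprod,
        mul_one]
    have hmem := Pset_of_word hIn'
    rw [hprod'] at hmem
    have hlt : (w1 ++ w3).length < w.length := by
      rw [hsplit]
      simp only [List.length_append]
      have : 0 < w2.length := List.length_pos_iff.mpr hne
      omega
    exact Nat.find_min hc (by omega) hmem
  have hge : Nat.find hc ≤ w.length := Nat.find_min' hc (by rw [← hwprod]; exact Pset_of_word hwIn)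
  refine ⟨w.take L, ?_, ?_, ?_⟩
  · exact fun a ha => hwIn a (List.take_subset _ _ ha)
  · rw [List.length_take]; omega
  · intro w1 w2 w3 hsplit hne
    apply hSA w1 w2 (w3 ++ w.drop L) _ hne
    rw [show w1 ++ w2 ++ (w3 ++ w.drop L) = (w1 ++ w2 ++ w3) ++ w.drop L by
      simp [List.append_assoc], ← hsplit, List.take_append_drop]


/-- windows of the function associated with a list are factors of the list -/
lemma win_eq_drop_take (w : List G) (d : G) (off : ℤ) (y : ℤ → G)
    (hy : ∀ j : ℤ, y j = (w[(j + off).toNat]?).getD d) :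
    ∀ (n : ℕ) (i : ℤ), 0 ≤ i + off → (i + off).toNat + n ≤ w.length →
      win y i n = (w.drop (i + off).toNat).take n := by
  intro n
  induction n with
  | zero => intro i _ _; simp [win]
  | succ n ih =>
      intro i hi hn
      rw [win_succ, ih i hi (by omega), List.take_succ, List.getElem?_drop,
        List.getElem?_eq_getElem (by omega)]
      congr 1
      rw [hy (i + n), show (i + (n:ℤ) + off).toNat = (i + off).toNat + n by omega,
        List.getElem?_eq_getElem (by omega)]
      rfl

/-- arbitrarily long partial self-avoiding configurations -/
lemma exists_partial [Infinite G] {S : Finset G} (hS0 : S.Nonempty)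
    (hsym : ∀ s ∈ S, s⁻¹ ∈ S) (hgen : Subgroup.closure (S : Set G) = ⊤) (L : ℕ) :
    ∃ y : ℤ → G, (∀ i, y i ∈ S) ∧
      ∀ (i : ℤ) (n : ℕ), 1 ≤ n → -(L:ℤ) ≤ i → i + n ≤ L → (win y i n).prod ≠ 1 := by
  obtain ⟨s0, hs0⟩ := hS0
  obtain ⟨w, hwIn, hwlen, hSA⟩ := exists_SA_word hsym hgen (2*L+1)
  refine ⟨fun i => (w[(i + (L:ℤ)).toNat]?).getD s0, ?_, ?_⟩
  · intro i
    show w[(i + (L:ℤ)).toNat]?.getD s0 ∈ S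
    rcases Nat.lt_or_ge (i + (L:ℤ)).toNat w.length with h | h
    · rw [List.getElem?_eq_getElem h]
      exact hwIn _ (List.getElem_mem h)
    · rw [List.getElem?_eq_none h]
      exact hs0
  · intro i n hn hiL hin
    have h0 : 0 ≤ i + (L:ℤ) := by omega
    have h1 : (i + (L:ℤ)).toNat + n ≤ w.length := by omega
    rw [win_eq_drop_take w s0 L _ (fun j => rfl) n i h0 h1]
    set a := (i + (L:ℤ)).toNat with ha
    intro hprod
    refine hSA (w.take a) ((w.drop a).take n) ((w.drop a).drop n) ?_ ?_ hprod
    · rw [List.append_assoc, List.take_append_drop, List.take_append_drop]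
    · have hlen : ((w.drop a).take n).length = n := by
        rw [List.length_take, List.length_drop]
        omega
      intro hnil
      rw [hnil] at hlen
      simp at hlen
      omega

lemma ultra_bUnion (U : Ultrafilter ℕ) (T : Finset G) (A : G → Set ℕ)
    (h : (⋃ s ∈ T, A s) ∈ U) : ∃ s ∈ T, A s ∈ U := by
  induction T using Finset.induction_on with
  | empty =>
      exfalso
      rw [show (⋃ s ∈ (∅:Finset G), A s) = ∅ by simp] at h
      exact Filter.empty_notMem (U : Filter ℕ) (Ultrafilter.mem_coe.mpr h)
  | insert _ _ ha ih =>
      rw [Finset.set_biUnion_insert] at h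
      rcases Ultrafilter.union_mem_iff.mp h with h' | h'
      · exact ⟨_, Finset.mem_insert_self _ _, h'⟩
      · obtain ⟨s, hs, hA⟩ := ih h'
        exact ⟨s, Finset.mem_insert_of_mem hs, hA⟩

/-- every infinite group with a symmetric generating set has a nonempty skeleton -/
lemma skeleton_nonempty [Infinite G] {S : Finset G} (hS0 : S.Nonempty)
    (hsym : ∀ s ∈ S, s⁻¹ ∈ S) (hgen : Subgroup.closure (S : Set G) = ⊤) :
    ∃ z, z ∈ Skeleton S := by
  have hpart := exists_partial hS0 hsym hgen
  choose Y hY1 hY2 using hpart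
  haveI : (Filter.cofinite : Filter ℕ).NeBot := Nat.cofinite_eq_atTop ▸ Filter.atTop_neBot
  set U : Ultrafilter ℕ := Ultrafilter.of Filter.cofinite with hU
  have hcof : ∀ A : Set ℕ, Aᶜ.Finite → A ∈ U := fun A hA =>
    (Ultrafilter.of_le Filter.cofinite) (Filter.mem_cofinite.mpr hA)
  have hch : ∀ i : ℤ, ∃ s ∈ S, {L : ℕ | Y L i = s} ∈ U := by
    intro i
    apply ultra_bUnion U S
    have huniv : (⋃ s ∈ S, {L : ℕ | Y L i = s}) = Set.univ := by
      apply Set.eq_univ_of_forall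
      intro L
      exact Set.mem_biUnion (hY1 L i) rfl
    rw [huniv]
    exact Filter.univ_mem
  choose xv hxS hxU using hch
  refine ⟨xv, hxS, ?_⟩
  intro w hfac hWP
  obtain ⟨hwIn, hne, hprod⟩ := hWP
  obtain ⟨i, hi⟩ := factor_eq_win hfac
  set n := w.length with hn
  have hn1 : 1 ≤ n := by
    have := List.length_pos_iff.mpr hne
    omega
  have hA : (⋂ k ∈ Finset.range n, {L : ℕ | Y L (i + (k:ℤ)) = xv (i + (k:ℤ))}) ∈ U :=
    (Filter.biInter_finset_mem _).mpr (fun k _ => hxU _)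
  have hB : {L : ℕ | i.natAbs + (i + (n:ℤ)).natAbs + n ≤ L} ∈ U := by
    apply hcof
    apply Set.Finite.subset (Set.finite_lt_nat (i.natAbs + (i + (n:ℤ)).natAbs + n))
    intro L hL
    simp only [Set.mem_compl_iff, Set.mem_setOf_eq, not_le] at hL
    exact hL
  obtain ⟨L, hLA, hLB⟩ := Ultrafilter.nonempty_of_mem (Filter.inter_mem hA hB)
  have hLA' : ∀ k : ℕ, k < n → Y L (i + (k:ℤ)) = xv (i + (k:ℤ)) := by
    intro k hk
    exact Set.mem_iInter₂.mp hLA k (Finset.mem_range.mpr hk)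
  have hwin : win xv i n = win (Y L) i n := win_congr (fun k hk => (hLA' k hk).symm)
  have hLB' : i.natAbs + (i + (n:ℤ)).natAbs + n ≤ L := hLB
  refine hY2 L i n hn1 (by omega) (by omega) ?_
  rw [← hwin, ← hi]
  exact hprod

end CaseA

lemma caseA {G : Type*} [Group G] [Infinite G] (hTor : ∀ g : G, IsOfFinOrder g) {S : Finset G}
    (hsym : ∀ s ∈ S, s⁻¹ ∈ S) (hgen : Subgroup.closure (S : Set G) = ⊤) :
    ¬ SkeletonIsSofic S := by
  classical
  rintro ⟨F, hFprop, ⟨σ, instσ, M, hM⟩, hEq⟩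
  haveI := instσ
  haveI : Fintype (Set σ) := Fintype.ofFinite _
  have hS0 : S.Nonempty := by
    rcases Finset.eq_empty_or_nonempty S with h | h
    · exfalso
      obtain ⟨g, hg⟩ := exists_ne (1 : G)
      have hgmem : g ∈ Subgroup.closure (S : Set G) := by rw [hgen]; trivial
      rw [h] at hgmem
      simp only [Finset.coe_empty, Subgroup.closure_empty, Subgroup.mem_bot] at hgmem
      exact hg hgmem
    · exact h
  obtain ⟨z, hzskel⟩ := skeleton_nonempty hS0 hsym hgen
  have hzF : ∀ i n, win z i n ∉ F := by
    intro i n hmem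
    have hz2 := hEq ▸ hzskel
    exact hz2.2 _ hmem (isFactorOf_win z i n)
  set Nn : ℕ := Fintype.card (Set σ) with hNn
  obtain ⟨c', d', hcd', hReq⟩ :
      ∃ c' d' : Fin (Nn+1), c' < d' ∧ Rset M z ((c' : ℕ) : ℤ) = Rset M z ((d' : ℕ) : ℤ) := by
    obtain ⟨a, b, hab, hfeq⟩ := Fintype.exists_ne_map_eq_of_card_lt
      (fun k : Fin (Nn+1) => Rset M z ((k : ℕ) : ℤ)) (by rw [Fintype.card_fin]; omega)
    rcases hab.lt_or_gt with hlt | hlt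
    · exact ⟨a, b, hlt, hfeq⟩
    · exact ⟨b, a, hlt, hfeq.symm⟩
  set c : ℤ := ((c' : ℕ) : ℤ) with hcdef
  set d : ℤ := ((d' : ℕ) : ℤ) with hddef
  have hcd : c < d := by
    have := (Fin.lt_iff_val_lt_val.mp hcd')
    omega
  set x : ℤ → G := fun j => z (c + (j - c) % (d - c)) with hxdef
  have hxd : ∀ j, x j = z (c + (j - c) % (d - c)) := fun j => rfl
  have hsafe : ∀ i n, win x i n ∉ F := periodic_safe M hM hzF hcd hReq x hxd
  have hxval : ∀ j, x j ∈ S := fun j => hzskel.1 _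
  have hxskel : x ∈ Skeleton S := by
    rw [hEq]
    refine ⟨hxval, ?_⟩
    intro w hw hfac
    obtain ⟨i, hi⟩ := factor_eq_win hfac
    exact hsafe i w.length (hi ▸ hw)
  set rn : ℕ := (d - c).toNat with hrn
  have hrn1 : 1 ≤ rn := by omega
  have hrnz : ((rn : ℕ) : ℤ) = d - c := by omega
  have hshift := here_shift hcd hxd
  have hperiod : ∀ (j : ℤ) (k : ℕ), x (j + (d - c) * k) = x j := by
    intro j k
    induction k with
    | zero => simp
    | succ k ih =>
        have hstep : j + (d - c) * ((k+1 : ℕ) : ℤ) = (j + (d - c) * ((k:ℕ) : ℤ)) + (d - c) := by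
          push_cast; ring
        rw [hstep, hshift, ih]
  set g0 : G := (win z c rn).prod with hg0
  have hPER : ∀ k : ℕ, (win x c (rn * k)).prod = g0 ^ k := by
    intro k
    induction k with
    | zero => simp
    | succ k ih =>
        rw [Nat.mul_succ, win_append, List.prod_append, ih]
        have hcast : ((rn * k : ℕ) : ℤ) = (d - c) * (k:ℤ) := by
          push_cast
          rw [hrnz]
        have h2 : win x (c + ((rn * k : ℕ) : ℤ)) rn = win x c rn := by
          apply win_congr
          intro j hj
          rw [show c + ((rn * k : ℕ) : ℤ) + (j:ℤ) = (c + j) + (d - c) * k by rw [hcast]; ring]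
          rw [hperiod (c + j) k]
        have h3 : win x c rn = win z c rn :=
          win_congr (fun j hj => here_agree hcd hxd _ (by omega) (by omega))
        rw [h2, h3, pow_succ, ← hg0]
  have hford := hTor g0
  have hm := hford.orderOf_pos
  have hbad : WP S (win x c (rn * orderOf g0)) := by
    refine ⟨win_wordIn hxval _ _, ?_, by rw [hPER, pow_orderOf_eq_one]⟩
    intro hnil
    have hl := congrArg List.length hnil
    rw [win_length] at hl
    have h0 : rn * orderOf g0 = 0 := by simpa using hl
    rcases Nat.mul_eq_zero.mp h0 with h | h <;> omega
  exact hxskel.2 _ (isFactorOf_win x c (rn * orderOf g0)) hbad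


end SkelAux

lemma symmgen_of {G : Type*} [Group G] [DecidableEq G] (T0 : Finset G)
    (hgen0 : Subgroup.closure (T0 : Set G) = ⊤)
    (E : Finset G) (hEsym : ∀ s ∈ E, s⁻¹ ∈ E) :
    IsSymmGen (((T0 ∪ T0.image (fun g => g⁻¹)) ∪ E).erase 1) := by
  refine ⟨?_, Finset.notMem_erase 1 _, ?_⟩
  · intro s hs
    rw [Finset.mem_erase] at hs ⊢
    obtain ⟨hne, hmem⟩ := hs
    refine ⟨fun h => hne (inv_eq_one.mp h), ?_⟩
    rcases Finset.mem_union.mp hmem with h | h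
    · rcases Finset.mem_union.mp h with h' | h'
      · exact Finset.mem_union_left _ (Finset.mem_union_right _
          (Finset.mem_image.mpr ⟨s, h', rfl⟩))
      · obtain ⟨u, hu, rfl⟩ := Finset.mem_image.mp h'
        rw [inv_inv]
        exact Finset.mem_union_left _ (Finset.mem_union_left _ hu)
    · exact Finset.mem_union_right _ (hEsym s h)
  · apply eq_top_iff.mpr
    rw [← hgen0]
    refine (Subgroup.closure_le _).mpr ?_
    intro g hg
    by_cases h1 : g = 1
    · exact SetLike.mem_coe.mpr (by rw [h1]; exact Subgroup.one_mem _)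
    · apply Subgroup.subset_closure
      apply Finset.mem_coe.mpr
      exact Finset.mem_erase.mpr ⟨h1,
        Finset.mem_union_left _ (Finset.mem_union_left _ (Finset.mem_coe.mp hg))⟩


/-- Every infinite finitely generated group admits a finite symmetric generating
set whose skeleton is not sofic. -/
theorem exists_generating_set_skeleton_not_sofic (G : Type*) [Group G] [Infinite G]
    [Group.FG G] :
    ∃ S : Finset G, IsSymmGen S ∧ ¬ SkeletonIsSofic S := by
  classical
  obtain ⟨T, hTgen, hTfin⟩ := Group.fg_iff.mp (inferInstance : Group.FG G)
  set T0 : Finset G := hTfin.toFinset with hT0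
  have hgen0 : Subgroup.closure (T0 : Set G) = ⊤ := by
    rw [hT0, Set.Finite.coe_toFinset]
    exact hTgen
  by_cases ht : ∃ t : G, ¬ IsOfFinOrder t
  · obtain ⟨t, ht⟩ := ht
    have htne : ∀ k : ℤ, k ≠ 0 → t ^ k ≠ 1 := fun k hk h =>
      hk (SkelAux.zpow_eq_zero_exp ht h)
    have e2 : t ^ (2:ℤ) = t ^ (2:ℕ) := by
      rw [show (2:ℤ) = ((2:ℕ):ℤ) by norm_num, zpow_natCast]
    have e3 : t ^ (3:ℤ) = t ^ (3:ℕ) := by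
      rw [show (3:ℤ) = ((3:ℕ):ℤ) by norm_num, zpow_natCast]
    have em1 : t ^ (-1:ℤ) = t⁻¹ := by rw [zpow_neg, zpow_one]
    have em2 : t ^ (-2:ℤ) = (t ^ (2:ℕ))⁻¹ := by rw [zpow_neg, e2]
    have em3 : t ^ (-3:ℤ) = (t ^ (3:ℕ))⁻¹ := by rw [zpow_neg, e3]
    set E : Finset G := {t, t^(2:ℕ), t^(3:ℕ), t⁻¹, (t^(2:ℕ))⁻¹, (t^(3:ℕ))⁻¹} with hE
    have hEsym : ∀ s ∈ E, s⁻¹ ∈ E := by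
      intro s hs
      rw [hE] at hs ⊢
      simp only [Finset.mem_insert, Finset.mem_singleton] at hs ⊢
      rcases hs with rfl|rfl|rfl|rfl|rfl|rfl <;> simp [inv_inv] <;> tauto
    have hSG := symmgen_of T0 hgen0 E hEsym
    refine ⟨_, hSG, ?_⟩
    apply SkelAux.caseB ht
    intro k hk
    rw [Finset.mem_erase]
    constructor
    · exact htne k (by rcases hk with rfl|rfl|rfl|rfl|rfl <;> norm_num)
    · refine Finset.mem_union_right _ ?_
      rw [hE]
      simp only [Finset.mem_insert, Finset.mem_singleton]
      rcases hk with rfl|rfl|rfl|rfl|rfl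
      · rw [e3]; tauto
      · rw [e2]; tauto
      · rw [em1]; tauto
      · rw [em2]; tauto
      · rw [em3]; tauto
  · push_neg at ht
    have hSG := symmgen_of T0 hgen0 (∅ : Finset G) (by simp)
    exact ⟨_, hSG, SkelAux.caseA ht hSG.1 hSG.2.2⟩
end

section
/- Let G be a group with finite symmetric generating set S. If the skeleton X^s_{G,S} is a minimal subshift, then G is just infinite: G is infinite and every nontrivial normal subgroup of G has finite index in G. -/
/-- The shift map on configurations. -/
def shiftMap {α : Type*} (x : ℤ → α) : ℤ → α := fun i => x (i + 1)

/-- The product topology on configurations, the alphabet being discrete. -/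
def configTopology (α : Type*) : TopologicalSpace (ℤ → α) :=
  @Pi.topologicalSpace ℤ (fun _ => α) (fun _ => ⊥)

/-- `X` is a minimal subshift: it is nonempty and its only nonempty closed
shift-invariant subset is `X` itself. -/
def IsMinimalSubshift {α : Type*} (X : Set (ℤ → α)) : Prop :=
  X.Nonempty ∧ ∀ Y : Set (ℤ → α), Y ⊆ X → @IsClosed _ (configTopology α) Y →
    (∀ x ∈ Y, shiftMap x ∈ Y) → Y.Nonempty → Y = X

set_option linter.unusedSectionVars false
namespace JIAux
variable {G : Type*} [Group G]

def fac (x : ℤ → G) (i : ℤ) (n : ℕ) : List G := (List.range n).map fun k : ℕ => x (i + (k : ℤ))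

lemma cast_list (l : List ℕ) : (do let a ← l; pure ((a : ℤ))) = l.map (fun a : ℕ => (a : ℤ)) := by
  induction l with
  | nil => rfl
  | cons h t ih => simpa using ih

lemma fac_length (x : ℤ → G) (i : ℤ) (n : ℕ) : (fac x i n).length = n := by
  rw [fac, List.length_map, List.length_range]

lemma fac_spec (x : ℤ → G) (i : ℤ) (n : ℕ) :
    ((List.range n).map fun k => x (i + k) : List G) = fac x i n := by
  show List.map _ (do let a ← List.range n; pure ((a : ℤ))) = _
  rw [cast_list, List.map_map, fac]
  rfl

lemma fac_zero (x : ℤ → G) (i : ℤ) : fac x i 0 = [] := by simp [fac]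

lemma fac_succ (x : ℤ → G) (i : ℤ) (n : ℕ) :
    fac x i (n + 1) = fac x i n ++ [x (i + n)] := by
  simp [fac, List.range_succ]

lemma fac_prod_succ (x : ℤ → G) (i : ℤ) (n : ℕ) :
    (fac x i (n + 1)).prod = (fac x i n).prod * x (i + n) := by
  rw [fac_succ, List.prod_append, List.prod_singleton]

lemma fac_cons (x : ℤ → G) (i : ℤ) (n : ℕ) :
    fac x i (n + 1) = x i :: fac x (i + 1) n := by
  rw [fac, List.range_succ_eq_map, List.map_cons, List.map_map]
  congr 1
  · norm_num
  · apply List.map_congr_left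
    intro k _
    simp only [Function.comp_apply]
    congr 1
    push_cast
    ring

lemma mem_fac {x : ℤ → G} {i : ℤ} {n : ℕ} {a : G} (h : a ∈ fac x i n) :
    ∃ k : ℕ, k < n ∧ a = x (i + k) := by
  simp only [fac, List.mem_map, List.mem_range] at h
  obtain ⟨k, hk, rfl⟩ := h
  exact ⟨k, hk, rfl⟩

lemma fac_congr {x y : ℤ → G} {i i' : ℤ} {n : ℕ}
    (h : ∀ k : ℕ, k < n → x (i + k) = y (i' + k)) : fac x i n = fac y i' n :=
  List.map_congr_left fun k hk => h k (List.mem_range.mp hk)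

/-- Membership in the skeleton, in terms of factors. -/
lemma skeleton_iff (S : Finset G) (x : ℤ → G) :
    x ∈ Skeleton S ↔ (∀ i, x i ∈ S) ∧ ∀ (i : ℤ) (n : ℕ), 0 < n → (fac x i n).prod ≠ 1 := by
  constructor
  · rintro ⟨h1, h2⟩
    refine ⟨h1, fun i n hn hprod => ?_⟩
    refine h2 (fac x i n) ⟨i, by rw [fac_length, fac_spec]⟩ ?_
    refine ⟨fun a ha => ?_, ?_, hprod⟩
    · obtain ⟨k, _, rfl⟩ := mem_fac ha; exact h1 _
    · intro hnil
      have := fac_length x i n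
      rw [hnil] at this
      simp at this
      omega
  · rintro ⟨h1, h2⟩
    refine ⟨h1, fun w hw hWP => ?_⟩
    obtain ⟨i, hi⟩ := hw
    obtain ⟨_, hne, hprod⟩ := hWP
    have hlen : 0 < w.length := List.length_pos_iff.mpr hne
    rw [fac_spec] at hi
    rw [hi] at hprod
    exact h2 i w.length hlen hprod

/-! ### Walks -/

/-- The configuration read along a walk `P`. -/
def walkCfg (P : ℤ → G) : ℤ → G := fun k => (P (k - 1))⁻¹ * P k

lemma fac_walkCfg_prod (P : ℤ → G) (i : ℤ) (n : ℕ) :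
    (fac (walkCfg P) i n).prod = (P (i - 1))⁻¹ * P (i - 1 + n) := by
  induction n with
  | zero => simp [fac_zero]
  | succ n ih =>
      rw [fac_prod_succ, ih, walkCfg]
      have : i + (n : ℤ) - 1 = i - 1 + n := by ring
      rw [this]
      push_cast
      group

/-- Partial products of a configuration: `pp x k = x 1 * ⋯ * x k` for `k ≥ 0`,
with the natural extension to negative `k`, normalized by `pp x 0 = 1`. -/
def pp (x : ℤ → G) : ℤ → G := fun k =>
  if 0 ≤ k then (fac x 1 k.toNat).prod else ((fac x (k + 1) (-k).toNat).prod)⁻¹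

lemma pp_zero (x : ℤ → G) : pp x 0 = 1 := by simp [pp, fac_zero]

lemma pp_step (x : ℤ → G) (k : ℤ) : pp x k = pp x (k - 1) * x k := by
  rcases le_or_gt 1 k with hk | hk
  · have h0 : (0 : ℤ) ≤ k := by omega
    have h1 : (0 : ℤ) ≤ k - 1 := by omega
    rw [pp, pp, if_pos h0, if_pos h1]
    have hT : k.toNat = (k - 1).toNat + 1 := by omega
    rw [hT, fac_prod_succ]
    congr 1
    have : (1 : ℤ) + ((k - 1).toNat : ℤ) = k := by omega
    rw [this]
  · have h1 : ¬ (0 : ℤ) ≤ k - 1 := by omega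
    rcases eq_or_lt_of_le (by omega : k ≤ 0) with rfl0 | hneg
    · rw [rfl0]
      rw [pp, pp, if_pos le_rfl, if_neg (by omega)]
      have : ((0 : ℤ) - 1 + 1) = 0 := by ring
      rw [this]
      have h2 : (-(0 - 1) : ℤ).toNat = 1 := by norm_num
      rw [h2]
      have h3 : fac x 0 1 = [x 0] := by
        rw [fac_cons, fac_zero]
      simp [fac_zero, h3]
    · have h0 : ¬ (0 : ℤ) ≤ k := by omega
      rw [pp, pp, if_neg h0, if_neg h1]
      have hT : (-(k - 1)).toNat = (-k).toNat + 1 := by omega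
      rw [hT]
      have h4 : (k - 1) + 1 = k := by ring
      rw [h4, fac_cons]
      rw [List.prod_cons]
      rw [mul_inv_rev]
      group

lemma walkCfg_pp (x : ℤ → G) : walkCfg (pp x) = x := by
  funext k
  rw [walkCfg, pp_step x k]
  group

lemma fac_prod_pp (x : ℤ → G) (i : ℤ) (n : ℕ) :
    (fac x i n).prod = (pp x (i - 1))⁻¹ * pp x (i - 1 + n) := by
  conv_lhs => rw [← walkCfg_pp x]
  exact fac_walkCfg_prod _ _ _

variable {G : Type*} [Group G]

/-- Configurations over `S` none of whose factors evaluates into `N`. -/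
def AvoidN (S : Finset G) (N : Subgroup G) : Set (ℤ → G) :=
  {x | (∀ i, x i ∈ S) ∧ ∀ (i : ℤ) (n : ℕ), 0 < n → (fac x i n).prod ∉ N}

lemma avoidN_subset_skeleton (S : Finset G) (N : Subgroup G) :
    AvoidN S N ⊆ Skeleton S := by
  intro x hx
  rw [skeleton_iff]
  refine ⟨hx.1, fun i n hn h1 => hx.2 i n hn ?_⟩
  rw [h1]
  exact N.one_mem

lemma shiftMap_mem_avoidN {S : Finset G} {N : Subgroup G} {x : ℤ → G}
    (hx : x ∈ AvoidN S N) : shiftMap x ∈ AvoidN S N := by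
  have hfac : ∀ (i : ℤ) (n : ℕ), fac (shiftMap x) i n = fac x (i + 1) n := by
    intro i n
    apply fac_congr
    intro k _
    show x (i + k + 1) = x (i + 1 + k)
    congr 1
    ring
  exact ⟨fun i => hx.1 (i + 1), fun i n hn => by rw [hfac]; exact hx.2 (i + 1) n hn⟩

lemma avoidN_closed (S : Finset G) (N : Subgroup G) :
    @IsClosed _ (configTopology G) (AvoidN S N) := by
  letI : TopologicalSpace G := ⊥
  haveI : DiscreteTopology G := discreteTopology_bot G
  show IsClosed (AvoidN S N)
  rw [← isOpen_compl_iff]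
  rw [isOpen_iff_forall_mem_open]
  intro x hx
  have hcyl : ∀ t : Finset ℤ, IsOpen {x' : ℤ → G | ∀ j ∈ t, x' j = x j} := by
    intro t
    have : {x' : ℤ → G | ∀ j ∈ t, x' j = x j} = ⋂ j ∈ t, (fun x' : ℤ → G => x' j) ⁻¹' {x j} := by
      ext x'; simp
    rw [this]
    exact isOpen_biInter_finset fun j _ => (continuous_apply j).isOpen_preimage _ (isOpen_discrete _)
  rw [AvoidN, Set.mem_compl_iff, Set.mem_setOf_eq, not_and_or] at hx
  rcases hx with hx | hx
  · push_neg at hx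
    obtain ⟨i, hi⟩ := hx
    refine ⟨{x' | ∀ j ∈ ({i} : Finset ℤ), x' j = x j}, ?_, hcyl _, by simp⟩
    intro x' hx'
    have : x' i = x i := hx' i (Finset.mem_singleton_self i)
    intro hx'mem
    exact hi (this ▸ hx'mem.1 i)
  · push_neg at hx
    obtain ⟨i, n, hn, hmem⟩ := hx
    refine ⟨{x' | ∀ j ∈ Finset.Icc i (i + (n : ℤ) - 1), x' j = x j}, ?_, hcyl _, ?_⟩
    · intro x' hx' hx'mem
      have hfac : fac x' i n = fac x i n := by
        apply fac_congr
        intro k hk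
        apply hx'
        rw [Finset.mem_Icc]
        omega
      exact hx'mem.2 i n hn (hfac ▸ hmem)
    · intro j hj
      rfl

/-! ### Excision: every word reduces to one with injective partial products -/

lemma reduce {H : Type*} [Group H] (A : Set H) :
    ∀ (n : ℕ) (l : List H), l.length ≤ n → (∀ a ∈ l, a ∈ A) →
      ∃ l' : List H, (∀ a ∈ l', a ∈ A) ∧ l'.prod = l.prod ∧
        ∀ i j : ℕ, i ≤ l'.length → j ≤ l'.length →
          (l'.take i).prod = (l'.take j).prod → i = j := by
  intro n
  induction n with
  | zero =>
      intro l hl hA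
      have : l = [] := List.length_eq_zero_iff.mp (Nat.le_zero.mp hl)
      subst this
      exact ⟨[], by simp, rfl, by intro i j hi hj _; simp at hi hj; omega⟩
  | succ n ih =>
      intro l hl hA
      by_cases hinj : ∀ i j : ℕ, i ≤ l.length → j ≤ l.length →
          (l.take i).prod = (l.take j).prod → i = j
      · exact ⟨l, hA, rfl, hinj⟩
      · push_neg at hinj
        obtain ⟨i, j, hi, hj, heq, hne⟩ := hinj
        have key : ∀ i j : ℕ, i < j → j ≤ l.length → (l.take i).prod = (l.take j).prod →
            ∃ l' : List H, (∀ a ∈ l', a ∈ A) ∧ l'.prod = l.prod ∧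
              ∀ i j : ℕ, i ≤ l'.length → j ≤ l'.length →
                (l'.take i).prod = (l'.take j).prod → i = j := by
          intro i j hij hjl heq
          have hlen' : (l.take i ++ l.drop j).length ≤ n := by
            rw [List.length_append, List.length_take, List.length_drop]
            omega
          have hA' : ∀ a ∈ l.take i ++ l.drop j, a ∈ A := by
            intro a ha
            rcases List.mem_append.mp ha with h | h
            · exact hA a (List.take_subset _ _ h)
            · exact hA a (List.drop_subset _ _ h)
          obtain ⟨l', h1, h2, h3⟩ := ih _ hlen' hA'
          refine ⟨l', h1, ?_, h3⟩
          rw [h2, List.prod_append, heq]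
          rw [← List.prod_append, List.take_append_drop]
        rcases lt_or_gt_of_ne hne with hlt | hlt
        · exact key i j hlt hj heq
        · exact key j i hlt hi heq.symm

/-! ### Balls and long words with injective partial products -/

def ball {H : Type*} [Group H] (T : Set H) (m : ℕ) : Set H :=
  {h | ∃ l : List H, (∀ a ∈ l, a ∈ T) ∧ l.length ≤ m ∧ l.prod = h}

lemma ball_finite {H : Type*} [Group H] {T : Set H} (hT : T.Finite) (m : ℕ) :
    (ball T m).Finite := by
  induction m with
  | zero =>
      apply Set.Finite.subset (Set.finite_singleton (1 : H))
      rintro h ⟨l, _, hlen, hprod⟩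
      have : l = [] := List.length_eq_zero_iff.mp (Nat.le_zero.mp hlen)
      subst this
      simp at hprod
      simp [hprod.symm]
  | succ m ih =>
      apply Set.Finite.subset (ih.union (Set.Finite.biUnion hT
        (fun t _ => ih.image (fun h => h * t))))
      rintro h ⟨l, hA, hlen, hprod⟩
      rcases Nat.lt_or_ge l.length (m + 1) with hlt | hge
      · exact Or.inl ⟨l, hA, by omega, hprod⟩
      · have hne : l ≠ [] := by
          intro h'; rw [h'] at hge; simp at hge
        have hdecomp := List.dropLast_append_getLast hne
        refine Or.inr ?_
        rw [Set.mem_iUnion₂]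
        refine ⟨l.getLast hne, hA _ (List.getLast_mem hne), ?_⟩
        refine ⟨l.dropLast.prod, ⟨l.dropLast, ?_, ?_, rfl⟩, ?_⟩
        · intro a ha; exact hA a (List.dropLast_subset _ ha)
        · have := (List.length_dropLast : l.dropLast.length = l.length - 1)
          omega
        · show l.dropLast.prod * l.getLast hne = h
          rw [← List.prod_singleton (x := l.getLast hne), ← List.prod_append, hdecomp, hprod]

/-- In an infinite group, for every `m` there is a word over a finite symmetric
generating set, of length at least `m`, with pairwise distinct partial products. -/
lemma exists_long_word {H : Type*} [Group H] [Infinite H] {T : Set H} (hTfin : T.Finite)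
    (hsym : ∀ t ∈ T, t⁻¹ ∈ T) (hgen : Subgroup.closure T = ⊤) (m : ℕ) :
    ∃ l : List H, (∀ a ∈ l, a ∈ T) ∧ m ≤ l.length ∧
      ∀ i j : ℕ, i ≤ l.length → j ≤ l.length →
        (l.take i).prod = (l.take j).prod → i = j := by
  obtain ⟨h, hh⟩ : ∃ h : H, h ∉ ball T m := by
    by_contra hcon
    push_neg at hcon
    exact Set.infinite_univ (α := H) ((ball_finite hTfin m).subset fun x _ => hcon x)
  -- a word for h over T
  have hmem : h ∈ Subgroup.closure T := hgen ▸ Subgroup.mem_top h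
  have hmem2 : h ∈ Submonoid.closure (T ∪ T⁻¹) := by
    rw [← Subgroup.closure_toSubmonoid]; exact hmem
  obtain ⟨l₀, hl₀, hprod₀⟩ := Submonoid.exists_list_of_mem_closure hmem2
  have hl₀' : ∀ a ∈ l₀, a ∈ T := by
    intro a ha
    rcases hl₀ a ha with h' | h'
    · exact h'
    · rw [Set.mem_inv] at h'
      simpa using hsym _ h'
  obtain ⟨l, hA, hprod, hinj⟩ := reduce T l₀.length l₀ le_rfl hl₀'
  refine ⟨l, hA, ?_, hinj⟩
  by_contra hshort
  push_neg at hshort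
  exact hh ⟨l, hA, by omega, by rw [hprod, hprod₀]⟩

/-- Lifting a word through a surjection onto the image of `S`. -/
lemma lift_word {H : Type*} [Group H] (π : G →* H) (S : Finset G) :
    ∀ l : List H, (∀ a ∈ l, a ∈ (π '' (S : Set G))) →
      ∃ l' : List G, (∀ a ∈ l', a ∈ S) ∧ l'.map π = l := by
  intro l
  induction l with
  | nil => exact fun _ => ⟨[], by simp, by simp⟩
  | cons a t ih =>
      intro hmem
      obtain ⟨l', h1, h2⟩ := ih fun b hb => hmem b (List.mem_cons_of_mem a hb)
      obtain ⟨s, hs, hsa⟩ := hmem a (List.mem_cons_self : a ∈ a :: t)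
      exact ⟨s :: l', by
        intro b hb
        rcases List.mem_cons.mp hb with rfl | hb
        · exact hs
        · exact h1 b hb, by simp [h2, hsa]⟩

/-! ### Placing a word on the line -/

lemma placed_prod (w : List G) (d : G) (m : ℕ) (i : ℤ) (n : ℕ)
    (hge : -(m : ℤ) ≤ i) (hlen : (i + m).toNat + n ≤ w.length) :
    (fac (fun t : ℤ => w.getD (t + m).toNat d) i n).prod =
      ((w.take (i + m).toNat).prod)⁻¹ * (w.take ((i + m).toNat + n)).prod := by
  induction n with
  | zero => simp [fac_zero]
  | succ n ih =>
      have hlen' : (i + m).toNat + n ≤ w.length := by omega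
      rw [fac_prod_succ, ih hlen']
      show _ * w.getD (i + (n : ℤ) + m).toNat d = _
      have hidx : (i + (n : ℤ) + m).toNat = (i + m).toNat + n := by omega
      rw [hidx, List.getD_eq_getElem w d (by omega)]
      have hstep := List.prod_take_succ w ((i + m).toNat + n) (by omega)
      have hcast : (i + (m : ℤ)).toNat + (n + 1) = (i + (m : ℤ)).toNat + n + 1 := by omega
      conv_rhs => rw [hcast, hstep]
      group

/-- If the quotient `G ⧸ N` is infinite, there is a configuration over `S`
avoiding `N`. -/
lemma avoidN_nonempty {S : Finset G} {N : Subgroup G} [N.Normal]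
    (hsym : ∀ s ∈ S, s⁻¹ ∈ S) (hgen : Subgroup.closure (S : Set G) = ⊤)
    (hinf : Infinite (G ⧸ N)) : (AvoidN S N).Nonempty := by
  classical
  set π : G →* G ⧸ N := QuotientGroup.mk' N with hπ
  have hπsurj : Function.Surjective π := QuotientGroup.mk'_surjective N
  set T : Set (G ⧸ N) := π '' (S : Set G) with hT
  have hTfin : T.Finite := (S.finite_toSet).image _
  have hTsym : ∀ t ∈ T, t⁻¹ ∈ T := by
    rintro t ⟨s, hs, rfl⟩
    exact ⟨s⁻¹, hsym s hs, by simp⟩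
  have hTgen : Subgroup.closure T = ⊤ := by
    rw [hT, ← MonoidHom.map_closure, hgen]
    exact Subgroup.map_top_of_surjective π hπsurj
  -- for each m, a long word over S whose partial products are distinct mod N
  have hword : ∀ m : ℕ, ∃ w : List G, (∀ a ∈ w, a ∈ S) ∧ 2 * m + 1 ≤ w.length ∧
      ∀ i j : ℕ, i ≤ w.length → j ≤ w.length →
        ((w.take i).prod)⁻¹ * (w.take j).prod ∈ N → i = j := by
    intro m
    obtain ⟨l, hlT, hllen, hlinj⟩ := exists_long_word hTfin hTsym hTgen (2 * m + 1)
    obtain ⟨w, hwS, hwmap⟩ := lift_word π S l hlT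
    have hwlen : w.length = l.length := by rw [← hwmap, List.length_map]
    refine ⟨w, hwS, by omega, ?_⟩
    intro i j hi hj hmem
    have hquot : π ((w.take i).prod) = π ((w.take j).prod) := by
      have h1 : π (((w.take i).prod)⁻¹ * (w.take j).prod) = 1 :=
        (QuotientGroup.eq_one_iff _).mpr hmem
      rw [map_mul, map_inv] at h1
      exact (inv_mul_eq_one.mp h1)
    have hπtake : ∀ k : ℕ, π ((w.take k).prod) = (l.take k).prod := by
      intro k
      rw [← hwmap, ← List.map_take, ← map_list_prod]
    rw [hπtake i, hπtake j] at hquot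
    exact hlinj i j (by omega) (by omega) hquot
  choose wseq hwS hwlen hwinj using hword
  -- a default letter
  have hS0 : ∃ s, s ∈ S := by
    have h3 : 1 ≤ (wseq 0).length := by have := hwlen 0; omega
    have hne : wseq 0 ≠ [] := by
      intro h; rw [h] at h3; simp at h3
    exact ⟨(wseq 0).head hne, hwS 0 _ (List.head_mem hne)⟩
  obtain ⟨s₀, hs₀⟩ := hS0
  set Wc : ℕ → ℤ → G := fun m t => (wseq m).getD (t + m).toNat s₀ with hWc
  have hWcS : ∀ m t, Wc m t ∈ S := by
    intro m t
    rcases Nat.lt_or_ge (t + (m : ℤ)).toNat (wseq m).length with h | h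
    · show (wseq m).getD (t + (m : ℤ)).toNat s₀ ∈ S
      rw [List.getD_eq_getElem _ _ h]
      exact hwS m _ (List.getElem_mem h)
    · show (wseq m).getD (t + (m : ℤ)).toNat s₀ ∈ S
      rw [List.getD_eq_default _ _ h]
      exact hs₀
  -- ultrafilter limit
  set U : Ultrafilter ℕ := Filter.hyperfilter ℕ with hU
  have hchoice : ∀ i : ℤ, ∃ a ∈ (S : Set G), (U.map fun m => Wc m i) = pure a := by
    intro i
    have hpre : (fun m => Wc m i) ⁻¹' (S : Set G) ∈ U := by
      have he : (fun m => Wc m i) ⁻¹' (S : Set G) = Set.univ := by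
        ext m; simp [hWcS m i]
      rw [he]
      exact Filter.univ_mem
    exact Ultrafilter.eq_pure_of_finite_mem S.finite_toSet (Ultrafilter.mem_map.mpr hpre)
  choose y hyS hylim using hchoice
  have hagree : ∀ i : ℤ, {m : ℕ | Wc m i = y i} ∈ U := by
    intro i
    have h1 : {y i} ∈ (U.map fun m => Wc m i) := by
      rw [hylim i]
      exact Ultrafilter.mem_pure.mpr rfl
    have h2 := Ultrafilter.mem_map.mp h1
    have he : (fun m => Wc m i) ⁻¹' {y i} = {m : ℕ | Wc m i = y i} := by
      ext m; simp
    rwa [he] at h2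
  refine ⟨y, hyS, ?_⟩
  intro i n hn hmem
  -- find a large m agreeing with y on the window
  have hbig : {m : ℕ | i.natAbs + n ≤ m} ∈ U := by
    apply Filter.hyperfilter_le_cofinite
    rw [Filter.mem_cofinite]
    exact (Set.finite_Iio (i.natAbs + n)).subset fun m hm => by
      simp only [Set.mem_compl_iff, Set.mem_setOf_eq, not_le] at hm
      simpa using hm
  have hwin : (⋂ k ∈ Finset.range n, {m : ℕ | Wc m (i + k) = y (i + k)}) ∈ U :=
    (Filter.biInter_finset_mem _).mpr fun k _ => hagree (i + k)
  have hint : ({m : ℕ | i.natAbs + n ≤ m} ∩ ⋂ k ∈ Finset.range n,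
      {m : ℕ | Wc m (i + k) = y (i + k)}) ∈ U := Filter.inter_mem hbig hwin
  obtain ⟨m, hm1, hm2⟩ := Filter.nonempty_of_mem hint
  have hagreewin : ∀ k : ℕ, k < n → Wc m (i + k) = y (i + k) := by
    intro k hk
    exact Set.mem_iInter₂.mp hm2 k (Finset.mem_range.mpr hk)
  have hfaceq : fac y i n = fac (Wc m) i n :=
    fac_congr fun k hk => (hagreewin k hk).symm
  have hL := hwlen m
  have hm1' : i.natAbs + n ≤ m := hm1
  have hge : -(m : ℤ) ≤ i := by omega
  have hlen2 : (i + (m : ℤ)).toNat + n ≤ (wseq m).length := by omega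
  have hprod := placed_prod (wseq m) s₀ m i n hge hlen2
  rw [hfaceq] at hmem
  rw [show (fac (Wc m) i n) = fac (fun t : ℤ => (wseq m).getD (t + m).toNat s₀) i n from rfl] at hmem
  rw [hprod] at hmem
  have := hwinj m ((i + (m : ℤ)).toNat) ((i + (m : ℤ)).toNat + n) (by omega) (by omega) hmem
  omega

end JIAux

open JIAux in
/-- If the skeleton of `(G,S)` is minimal, then `G` is just infinite: `G` is
infinite and every nontrivial normal subgroup has finite index. -/
theorem just_infinite_of_minimal_skeleton {G : Type*} [Group G] (S : Finset G)
    (hsym : ∀ s ∈ S, s⁻¹ ∈ S) (h1 : (1 : G) ∉ S)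
    (hgen : Subgroup.closure (S : Set G) = ⊤)
    (hmin : IsMinimalSubshift (Skeleton S)) :
    Infinite G ∧ ∀ N : Subgroup G, N.Normal → N ≠ ⊥ → N.index ≠ 0 := by
  classical
  obtain ⟨x₀, hx₀⟩ := hmin.1
  rw [skeleton_iff] at hx₀
  have hInf : Infinite G := by
    refine Infinite.of_injective (pp x₀) ?_
    intro a b hab
    by_contra hne
    have key : ∀ a b : ℤ, a < b → pp x₀ a = pp x₀ b → False := by
      intro a b h hab
      refine hx₀.2 (a + 1) ((b - a).toNat) (by omega) ?_
      rw [fac_prod_pp]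
      have e1 : a + 1 - 1 = a := by ring
      have e2 : a + (((b - a).toNat : ℤ)) = b := by omega
      rw [e1, e2, hab]
      group
    rcases lt_or_gt_of_ne hne with h | h
    · exact key a b h hab
    · exact key b a h hab.symm
  refine ⟨hInf, ?_⟩
  intro N hN hNbot hidx0
  haveI := hN
  -- the quotient is infinite
  have hinfQ : Infinite (G ⧸ N) := by
    rw [Subgroup.index_eq_card] at hidx0
    rcases Nat.card_eq_zero.mp hidx0 with h | h
    · exact absurd h (not_isEmpty_of_nonempty _)
    · exact h
  obtain ⟨y, hy⟩ := avoidN_nonempty hsym hgen hinfQ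
  have hmineq := hmin.2 (AvoidN S N) (avoidN_subset_skeleton S N) (avoidN_closed S N)
    (fun x hx => shiftMap_mem_avoidN hx) ⟨y, hy⟩
  -- a nontrivial element of N
  obtain ⟨g, hgN, hg1⟩ : ∃ g ∈ N, g ≠ (1 : G) := by
    by_contra hc
    push_neg at hc
    exact hNbot ((Subgroup.eq_bot_iff_forall N).mpr hc)
  -- a word for g with injective partial products
  have hgmem : g ∈ Subgroup.closure (S : Set G) := hgen ▸ Subgroup.mem_top g
  have hgmem2 : g ∈ Submonoid.closure ((S : Set G) ∪ (S : Set G)⁻¹) := by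
    rw [← Subgroup.closure_toSubmonoid]; exact hgmem
  obtain ⟨l₀, hl₀, hprod₀⟩ := Submonoid.exists_list_of_mem_closure hgmem2
  have hl₀S : ∀ a ∈ l₀, a ∈ (S : Set G) := by
    intro a ha
    rcases hl₀ a ha with h' | h'
    · exact h'
    · rw [Set.mem_inv] at h'
      simpa using hsym _ h'
  obtain ⟨w, hwS, hwprod, hwinj⟩ := reduce (S : Set G) l₀.length l₀ le_rfl hl₀S
  rw [hprod₀] at hwprod
  set ℓ : ℕ := w.length with hℓ
  set wp : ℕ → G := fun k => (w.take k).prod with hwp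
  set q : ℤ → G := pp y with hqdef
  have hq0 : q 0 = 1 := pp_zero y
  have hqstep : ∀ k : ℤ, q k = q (k - 1) * y k := fun k => pp_step y k
  have hqN : ∀ a b : ℤ, a ≠ b → (q a)⁻¹ * q b ∉ N := by
    have key : ∀ a b : ℤ, a < b → (q a)⁻¹ * q b ∉ N := by
      intro a b h hmem
      refine hy.2 (a + 1) ((b - a).toNat) (by omega) ?_
      rw [fac_prod_pp]
      have e1 : a + 1 - 1 = a := by ring
      have e2 : a + (((b - a).toNat : ℤ)) = b := by omega
      rw [e1, e2]
      exact hmem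
    intro a b hne hmem
    rcases lt_or_gt_of_ne hne with h | h
    · exact key a b h hmem
    · refine key b a h ?_
      have := N.inv_mem hmem
      rwa [mul_inv_rev, inv_inv] at this
  have hqinj : Function.Injective q := by
    intro a b hab
    by_contra hne
    refine hqN a b hne ?_
    rw [hab]
    simpa using N.one_mem
  have hwp0 : wp 0 = 1 := by simp [hwp]
  have hwpl : wp ℓ = g := by
    rw [hwp]
    simp only [hℓ, List.take_length]
    exact hwprod
  have hwpstep : ∀ i : ℕ, i < ℓ → (wp i)⁻¹ * wp (i + 1) ∈ S := by
    intro i hi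
    have hstep := List.prod_take_succ w i hi
    have : (wp i)⁻¹ * wp (i + 1) = w[i] := by
      rw [hwp]
      simp only []
      rw [hstep]
      group
    rw [this]
    exact hwS _ (List.getElem_mem hi)
  -- the two tails never meet
  have hdisj : ∀ a b : ℕ, q (-(a : ℤ)) ≠ g * q (-(b : ℤ)) := by
    intro a b heq
    by_cases hab : a = b
    · subst hab
      have h2 : (1 : G) * q (-(a : ℤ)) = g * q (-(a : ℤ)) := by
        rw [one_mul]; exact heq
      exact hg1 (mul_right_cancel h2).symm
    · have hc : (q (-(b : ℤ)))⁻¹ * q (-(a : ℤ)) ∈ N := by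
        rw [heq]
        have hconj := hN.conj_mem g hgN (q (-(b : ℤ)))⁻¹
        rw [inv_inv] at hconj
        rwa [← mul_assoc]
      exact hqN _ _ (by omega) hc
  -- maximal index of the word path meeting the left tail
  set SL : Finset ℕ := (Finset.range (ℓ + 1)).filter (fun i => ∃ a : ℕ, wp i = q (-(a : ℤ))) with hSL
  have hSL0 : 0 ∈ SL := by
    refine Finset.mem_filter.mpr ⟨Finset.mem_range.mpr (by omega), ⟨0, ?_⟩⟩
    rw [hwp0]
    simp [hq0]
  set Istar : ℕ := SL.max' ⟨0, hSL0⟩ with hIstar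
  have hIstarSL : Istar ∈ SL := Finset.max'_mem _ _
  have hIstarle : Istar ≤ ℓ := by
    have := Finset.mem_range.mp (Finset.mem_filter.mp hIstarSL).1
    omega
  obtain ⟨Astar, hAstar⟩ := (Finset.mem_filter.mp hIstarSL).2
  have hImax : ∀ i : ℕ, i ≤ ℓ → (∃ a : ℕ, wp i = q (-(a : ℤ))) → i ≤ Istar := by
    intro i hi hex
    exact Finset.le_max' _ i (Finset.mem_filter.mpr ⟨Finset.mem_range.mpr (by omega), hex⟩)
  -- minimal index ≥ Istar of the word path meeting the right tail
  set SR : Finset ℕ := (Finset.Icc Istar ℓ).filter (fun j => ∃ b : ℕ, wp j = g * q (-(b : ℤ))) with hSR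
  have hSRl : ℓ ∈ SR := by
    refine Finset.mem_filter.mpr ⟨Finset.mem_Icc.mpr ⟨hIstarle, le_rfl⟩, ⟨0, ?_⟩⟩
    rw [hwpl]
    simp [hq0]
  set J : ℕ := SR.min' ⟨ℓ, hSRl⟩ with hJ
  have hJSR : J ∈ SR := Finset.min'_mem _ _
  obtain ⟨Bstar, hBstar⟩ := (Finset.mem_filter.mp hJSR).2
  have hJIcc := Finset.mem_Icc.mp (Finset.mem_filter.mp hJSR).1
  have hJmin : ∀ j : ℕ, Istar ≤ j → j ≤ ℓ → (∃ b : ℕ, wp j = g * q (-(b : ℤ))) → J ≤ j := by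
    intro j h1' h2' hex
    exact Finset.min'_le _ j (Finset.mem_filter.mpr ⟨Finset.mem_Icc.mpr ⟨h1', h2'⟩, hex⟩)
  have hIJ : Istar < J := by
    rcases eq_or_lt_of_le hJIcc.1 with heq | h
    · exfalso
      apply hdisj Astar Bstar
      rw [← hAstar, heq, hBstar]
    · exact h
  set K : ℕ := J - Istar with hK
  have hIK : Istar + K = J := by omega
  have hK1 : 1 ≤ K := by omega
  -- the spliced walk
  set P : ℤ → G := fun k =>
    if k ≤ 0 then q (k - (Astar : ℤ))
    else if k ≤ (K : ℤ) then wp (Istar + k.toNat)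
    else g * q (-(Bstar : ℤ) - (k - (K : ℤ))) with hP
  have hPa : ∀ k : ℤ, k ≤ 0 → P k = q (k - (Astar : ℤ)) := by
    intro k hk
    rw [hP]
    simp only [if_pos hk]
  have hPb : ∀ k : ℤ, 0 ≤ k → k ≤ (K : ℤ) → P k = wp (Istar + k.toNat) := by
    intro k h0 hK'
    rcases eq_or_lt_of_le h0 with heq | h
    · rw [hPa k (by omega)]
      have : k - (Astar : ℤ) = -(Astar : ℤ) := by omega
      rw [this, ← hAstar]
      congr 1
      omega
    · rw [hP]
      simp only [if_neg (by omega : ¬ k ≤ 0), if_pos hK']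
  have hPc : ∀ k : ℤ, (K : ℤ) ≤ k → P k = g * q (-(Bstar : ℤ) - (k - (K : ℤ))) := by
    intro k hk
    rcases eq_or_lt_of_le hk with heq | h
    · rw [hPb k (by omega) (by omega)]
      have h1' : Istar + k.toNat = J := by omega
      rw [h1', hBstar]
      congr 2
      omega
    · rw [hP]
      simp only [if_neg (by omega : ¬ k ≤ 0), if_neg (by omega : ¬ k ≤ (K : ℤ))]
  -- labels of the walk are in S
  have hlabel : ∀ k : ℤ, (P (k - 1))⁻¹ * P k ∈ S := by
    intro k
    rcases le_or_gt k 0 with hk | hk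
    · rw [hPa k hk, hPa (k - 1) (by omega)]
      have e : k - 1 - (Astar : ℤ) = (k - (Astar : ℤ)) - 1 := by ring
      rw [e]
      have := hqstep (k - (Astar : ℤ))
      rw [this]
      have : (q (k - (Astar:ℤ) - 1))⁻¹ * (q (k - (Astar:ℤ) - 1) * y (k - (Astar:ℤ))) = y (k - (Astar:ℤ)) := by group
      rw [this]
      exact hy.1 _
    · rcases le_or_gt k (K : ℤ) with hk2 | hk2
      · rw [hPb k (by omega) hk2, hPb (k - 1) (by omega) (by omega)]
        have e : k.toNat = (k - 1).toNat + 1 := by omega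
        rw [e]
        have e2 : Istar + ((k - 1).toNat + 1) = (Istar + (k - 1).toNat) + 1 := by omega
        rw [e2]
        refine hwpstep _ ?_
        omega
      · rw [hPc k (by omega), hPc (k - 1) (by omega)]
        set m : ℤ := -(Bstar : ℤ) - (k - 1 - (K : ℤ)) with hm
        have e1 : -(Bstar : ℤ) - (k - (K : ℤ)) = m - 1 := by rw [hm]; ring
        rw [e1]
        have hstep := hqstep m
        have : (g * q m)⁻¹ * (g * q (m - 1)) = (y m)⁻¹ := by
          rw [hstep]
          group
        rw [this]
        exact hsym _ (hy.1 m)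
  -- injectivity of the walk
  have hPinj : Function.Injective P := by
    have hwpinj' : ∀ i j : ℕ, i ≤ ℓ → j ≤ ℓ → wp i = wp j → i = j := hwinj
    intro k k' heq
    by_contra hne
    -- regime helpers
    have case_ab : ∀ u v : ℤ, u ≤ 0 → 0 < v → v ≤ (K : ℤ) → P u = P v → False := by
      intro u v hu hv1 hv2 huv
      rw [hPa u hu, hPb v (by omega) hv2] at huv
      have hiℓ : Istar + v.toNat ≤ ℓ := by omega
      have hmem : ∃ a : ℕ, wp (Istar + v.toNat) = q (-(a : ℤ)) := by
        refine ⟨(Astar - u).toNat, ?_⟩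
        rw [← huv]
        congr 1
        omega
      have := hImax _ hiℓ hmem
      omega
    have case_ac : ∀ u v : ℤ, u ≤ 0 → (K : ℤ) < v → P u = P v → False := by
      intro u v hu hv huv
      rw [hPa u hu, hPc v (by omega)] at huv
      refine hdisj (Astar - u).toNat (Bstar + (v - K)).toNat ?_
      have e1 : -((Astar - u).toNat : ℤ) = u - (Astar : ℤ) := by omega
      have e2 : -((Bstar + (v - (K:ℤ))).toNat : ℤ) = -(Bstar : ℤ) - (v - (K : ℤ)) := by omega
      rw [e1, e2]
      exact huv
    have case_bc : ∀ u v : ℤ, 0 < u → u ≤ (K : ℤ) → (K : ℤ) < v → P u = P v → False := by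
      intro u v hu1 hu2 hv huv
      rw [hPb u (by omega) hu2, hPc v (by omega)] at huv
      have hjl : Istar + u.toNat ≤ ℓ := by omega
      have hmem : ∃ b : ℕ, wp (Istar + u.toNat) = g * q (-(b : ℤ)) := by
        refine ⟨(Bstar + (v - K)).toNat, ?_⟩
        rw [huv]
        congr 2
        omega
      have hJle := hJmin _ (by omega) hjl hmem
      -- then u = K
      have hu3 : u = (K : ℤ) := by omega
      rw [hu3] at huv
      have e3 : Istar + ((K : ℤ)).toNat = J := by omega
      rw [e3, hBstar] at huv
      have := hqinj (mul_left_cancel huv)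
      omega
    rcases le_or_gt k 0 with hk | hk <;> rcases le_or_gt k' 0 with hk' | hk'
    · -- both ≤ 0
      rw [hPa k hk, hPa k' hk'] at heq
      have := hqinj heq
      omega
    · rcases le_or_gt k' (K : ℤ) with hk'2 | hk'2
      · exact case_ab k k' hk hk' hk'2 heq
      · exact case_ac k k' hk hk'2 heq
    · rcases le_or_gt k (K : ℤ) with hk2 | hk2
      · exact case_ab k' k hk' hk hk2 heq.symm
      · exact case_ac k' k hk' hk2 heq.symm
    · rcases le_or_gt k (K : ℤ) with hk2 | hk2 <;> rcases le_or_gt k' (K : ℤ) with hk'2 | hk'2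
      · rw [hPb k (by omega) hk2, hPb k' (by omega) hk'2] at heq
        have := hwpinj' _ _ (by omega) (by omega) heq
        omega
      · exact case_bc k k' hk hk2 hk'2 heq
      · exact case_bc k' k hk' hk'2 hk2 heq.symm
      · rw [hPc k (by omega), hPc k' (by omega)] at heq
        have := hqinj (mul_left_cancel heq)
        omega
  -- the spliced configuration is in the skeleton
  set z : ℤ → G := walkCfg P with hz
  have hzskel : z ∈ Skeleton S := by
    rw [skeleton_iff]
    refine ⟨fun k => hlabel k, fun i n hn hone => ?_⟩
    rw [hz, fac_walkCfg_prod] at hone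
    have := hPinj (inv_mul_eq_one.mp hone)
    omega
  rw [← hmineq] at hzskel
  -- but z has a factor evaluating into N
  set A : ℕ := max Astar Bstar with hA
  set k₁ : ℤ := (Astar : ℤ) - A with hk₁
  set k₂ : ℤ := (K : ℤ) + ((A : ℤ) - Bstar) with hk₂
  have hPk₁ : P k₁ = q (-(A : ℤ)) := by
    rw [hPa k₁ (by omega)]
    congr 1
    omega
  have hPk₂ : P k₂ = g * q (-(A : ℤ)) := by
    rw [hPc k₂ (by omega)]
    congr 2
    omega
  have hfinal : (fac z (k₁ + 1) ((k₂ - k₁).toNat)).prod ∈ N := by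
    rw [hz, fac_walkCfg_prod]
    have e1 : k₁ + 1 - 1 = k₁ := by ring
    have e2 : k₁ + (((k₂ - k₁).toNat : ℤ)) = k₂ := by omega
    rw [e1, e2, hPk₁, hPk₂]
    have hconj := hN.conj_mem g hgN (q (-(A : ℤ)))⁻¹
    rw [inv_inv] at hconj
    rwa [← mul_assoc]
  exact hzskel.2 (k₁ + 1) ((k₂ - k₁).toNat) (by omega) hfinal
end

section
/- Let G be a group with finite symmetric generating set S. If the skeleton X^s_{G,S} is a minimal subshift, then for every proper symmetric subset S' ⊊ S (S' = S'⁻¹), the subgroup ⟨S'⟩ generated by S' is finite. In particular, if G is infinite and torsion-free, then X^s_{G,S} is not minimal for any finite symmetric generating set S. -/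
namespace SkelAux

variable {G : Type*} [Group G]

/-- The product of the window of length `L` starting at position `i`. -/
def W (x : ℤ → G) (i : ℤ) (L : ℕ) : G := ((List.range L).map fun k : ℕ => x (i + (k : ℤ))).prod

@[simp] lemma W_zero (x : ℤ → G) (i : ℤ) : W x i 0 = 1 := rfl

@[simp] lemma W_one (x : ℤ → G) (i : ℤ) : W x i 1 = x i := by
  have : List.range 1 = [0] := rfl
  simp [W, this]

lemma W_succ_right (x : ℤ → G) (i : ℤ) (L : ℕ) :
    W x i (L + 1) = W x i L * x (i + L) := by
  simp [W, List.range_succ]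

lemma W_congr {x y : ℤ → G} (i : ℤ) (L : ℕ) (h : ∀ k : ℕ, k < L → x (i + k) = y (i + k)) :
    W x i L = W y i L := by
  unfold W
  have : (List.range L).map (fun k : ℕ => x (i + (k:ℤ))) =
      (List.range L).map (fun k : ℕ => y (i + (k:ℤ))) :=
    List.map_congr_left (fun a ha => h a (List.mem_range.mp ha))
  rw [this]

lemma W_add (x : ℤ → G) (i : ℤ) (a b : ℕ) :
    W x i (a + b) = W x i a * W x (i + a) b := by
  induction b with
  | zero => simp
  | succ b ih =>
      have h : a + (b + 1) = (a + b) + 1 := by ring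
      rw [h, W_succ_right, ih, W_succ_right, mul_assoc]
      congr 2
      push_cast
      ring

lemma W_succ_left (x : ℤ → G) (i : ℤ) (L : ℕ) :
    W x i (L + 1) = x i * W x (i + 1) L := by
  have h : (1 : ℕ) + L = L + 1 := by ring
  have h2 := W_add x i 1 L
  rw [h] at h2
  simpa using h2

lemma W_shift (x : ℤ → G) (c i : ℤ) (L : ℕ) :
    W (fun t => x (t + c)) i L = W x (i + c) L := by
  unfold W
  have : (List.range L).map (fun k : ℕ => x (i + (k:ℤ) + c)) =
      (List.range L).map (fun k : ℕ => x (i + c + (k:ℤ))) :=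
    List.map_congr_left (fun a _ => by congr 1; ring)
  rw [this]

lemma list_coe_eq_map (l : List ℕ) : (l.flatMap fun a => [(a : ℤ)]) = l.map (fun a : ℕ => (a:ℤ)) := by
  induction l with
  | nil => rfl
  | cons a l ih => simp [List.flatMap_cons, ih, ← List.map_eq_flatMap]

lemma factor_list_eq (x : ℤ → G) (i : ℤ) (L : ℕ) :
    ((List.range L).map fun k => x (i + k)) = (List.range L).map (fun k : ℕ => x (i + (k:ℤ))) := by
  simp only [List.pure_def, List.bind_eq_flatMap, list_coe_eq_map, List.map_map]
  simp [← List.map_eq_flatMap, List.map_map]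

/-- Characterization of skeleton membership in terms of window products. -/
lemma mem_skeleton_iff (S : Finset G) (x : ℤ → G) :
    x ∈ Skeleton S ↔ (∀ i, x i ∈ S) ∧ ∀ (i : ℤ) (L : ℕ), 1 ≤ L → W x i L ≠ 1 := by
  constructor
  · rintro ⟨h1, h2⟩
    refine ⟨h1, fun i L hL hW => ?_⟩
    set w : List G := (List.range L).map (fun k : ℕ => x (i + (k:ℤ))) with hw
    have hlen : w.length = L := by simp [hw]
    have hfac : IsFactorOf w x := by
      refine ⟨i, ?_⟩
      rw [hlen, factor_list_eq]
    refine h2 w hfac ⟨?_, ?_, hW⟩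
    · intro a ha
      rw [hw] at ha
      obtain ⟨k, _, rfl⟩ := List.mem_map.mp ha
      exact h1 _
    · intro hnil
      rw [hnil] at hlen
      simp at hlen
      omega
  · rintro ⟨h1, h2⟩
    refine ⟨h1, ?_⟩
    rintro w ⟨i, hw⟩ ⟨_, hne, hprod⟩
    have hL : 1 ≤ w.length := List.length_pos_iff.mpr hne
    apply h2 i w.length hL
    rw [factor_list_eq] at hw
    unfold W
    rw [← hw]
    exact hprod

/-- Skeleton is invariant under arbitrary integer shifts. -/
lemma skeleton_shift {S : Finset G} {x : ℤ → G} (hx : x ∈ Skeleton S) (c : ℤ) :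
    (fun t => x (t + c)) ∈ Skeleton S := by
  rw [mem_skeleton_iff] at hx ⊢
  exact ⟨fun i => hx.1 _, fun i L hL => by rw [W_shift]; exact hx.2 _ L hL⟩

/-- The reversal lemma: window products of the reversed configuration. -/
lemma W_reverse (x : ℤ → G) (i : ℤ) (L : ℕ) :
    W (fun t => (x (-t))⁻¹) i L = (W x (1 - i - L) L)⁻¹ := by
  induction L generalizing i with
  | zero => simp
  | succ L ih =>
      have hc : ((L+1 : ℕ) : ℤ) = (L:ℤ)+1 := by push_cast; ring
      rw [W_succ_left, ih (i+1), W_succ_right, mul_inv_rev, hc]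
      have e1 : (1:ℤ) - (i+1) - L = 1 - i - ((L:ℤ)+1) := by ring
      have e2 : (1 - i - ((L:ℤ)+1)) + L = -i := by ring
      rw [e1, e2]

/-- The reversed configuration lies in the skeleton (for symmetric `S`). -/
lemma skeleton_reverse {S : Finset G} (hsym : ∀ s ∈ S, s⁻¹ ∈ S) {x : ℤ → G}
    (hx : x ∈ Skeleton S) : (fun t => (x (-t))⁻¹) ∈ Skeleton S := by
  rw [mem_skeleton_iff] at hx ⊢
  refine ⟨fun i => hsym _ (hx.1 _), fun i L hL => ?_⟩
  rw [W_reverse]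
  simp only [ne_eq, inv_eq_one]
  exact hx.2 _ L hL

end SkelAux
namespace SkelAux

variable {G : Type*} [Group G]

lemma take_succ_prod (B : List G) (b : ℕ) (h : b < B.length) :
    (B.take (b+1)).prod = (B.take b).prod * B[b] := by
  rw [List.take_succ, List.getElem?_eq_getElem h]
  rw [Option.toList_some, List.prod_append, List.prod_cons, List.prod_nil, mul_one]

/-- The set of evaluations of nonempty factors of skeleton configurations. -/
def ESet (S : Finset G) : Set G := {g | ∃ y ∈ Skeleton S, ∃ n : ℕ, 1 ≤ n ∧ W y 0 n = g}

lemma mem_ESet_window {S : Finset G} {y : ℤ → G} (hy : y ∈ Skeleton S) (i : ℤ) {L : ℕ}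
    (hL : 1 ≤ L) : W y i L ∈ ESet S := by
  refine ⟨fun t => y (t + i), skeleton_shift hy i, L, hL, ?_⟩
  rw [W_shift, zero_add]

lemma one_notmem_ESet (S : Finset G) : (1 : G) ∉ ESet S := by
  rintro ⟨y, hy, n, hn, hW⟩
  exact ((mem_skeleton_iff S y).mp hy).2 0 n hn hW

lemma ESet_inv {S : Finset G} (hsym : ∀ s ∈ S, s⁻¹ ∈ S) {g : G} (hg : g ∈ ESet S) :
    g⁻¹ ∈ ESet S := by
  obtain ⟨y, hy, n, hn, hW⟩ := hg
  have hrev := skeleton_reverse hsym hy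
  have hval : W (fun t => (y (-t))⁻¹) (1 - n) n = g⁻¹ := by
    rw [W_reverse]
    have h0 : (1 : ℤ) - (1 - (n:ℤ)) - n = 0 := by ring
    rw [h0, hW]
  rw [← hval]
  exact mem_ESet_window hrev _ hn

/-- Replacement surgery: replace a realized block of `y` (evaluating to `W y 0 n`) by the
block `B` with the same evaluation, whose proper prefix evaluations avoid `ESet S`. -/
lemma surgery {S : Finset G} (hsym : ∀ s ∈ S, s⁻¹ ∈ S) {y : ℤ → G} (hy : y ∈ Skeleton S)
    {n : ℕ} (hn : 1 ≤ n) {B : List G}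
    (hBS : ∀ b ∈ B, b ∈ S)
    (hm : 1 ≤ B.length)
    (hprod : B.prod = W y 0 n)
    (hπE : ∀ ρ : ℕ, 1 ≤ ρ → ρ < B.length → (B.take ρ).prod ∉ ESet S)
    (hπinj : ∀ a b : ℕ, a < b → b < B.length → (B.take a).prod ≠ (B.take b).prod) :
    (fun t : ℤ => if t < 0 then y t else if t < (B.length : ℤ) then B.getD t.toNat 1
      else y (t - B.length + n)) ∈ Skeleton S := by
  set m := B.length with hmdef
  set z : ℤ → G := fun t : ℤ => if t < 0 then y t else if t < (m : ℤ) then B.getD t.toNat 1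
      else y (t - m + n) with hzdef
  have hy' := (mem_skeleton_iff S y).mp hy
  have hyg := hy'.2
  -- letters
  have hletters : ∀ t, z t ∈ S := by
    intro t
    by_cases h1 : t < 0
    · simp only [hzdef, if_pos h1]; exact hy'.1 t
    · by_cases h2 : t < (m:ℤ)
      · simp only [hzdef, if_neg h1, if_pos h2]
        have ht : t.toNat < m := by omega
        rw [List.getD_eq_getElem B 1 ht]
        exact hBS _ (List.getElem_mem ht)
      · simp only [hzdef, if_neg h1, if_neg h2]; exact hy'.1 _
  -- value lemmas
  have hz_left : ∀ (a : ℤ) (L : ℕ), a + L ≤ 0 → W z a L = W y a L := by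
    intro a L h
    apply W_congr
    intro k hk
    have hneg : a + k < 0 := by omega
    simp only [hzdef, if_pos hneg]
  have hz_right : ∀ (a : ℤ) (L : ℕ), (m:ℤ) ≤ a → W z a L = W y (a - m + n) L := by
    intro a L h
    have h1 : W z a L = W (fun t => y (t + ((n:ℤ) - m))) a L := by
      apply W_congr
      intro k hk
      have h2 : ¬ (a + k < 0) := by omega
      have h3 : ¬ (a + k < (m:ℤ)) := by omega
      simp only [hzdef, if_neg h2, if_neg h3]
      congr 1
      ring
    rw [h1, W_shift]
    congr 1
    ring
  have hπW : ∀ b : ℕ, b ≤ m → W z 0 b = (B.take b).prod := by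
    intro b
    induction b with
    | zero => intro _; simp
    | succ b ih =>
        intro hb
        have hb' : b < m := by omega
        rw [W_succ_right, ih (le_of_lt hb'), take_succ_prod B b hb']
        congr 1
        have h1 : ¬ ((0:ℤ) + b < 0) := by omega
        have h2 : (0:ℤ) + b < (m:ℤ) := by omega
        simp only [hzdef, if_neg h1, if_pos h2]
        have e : ((0:ℤ) + b).toNat = b := by omega
        rw [e, List.getD_eq_getElem B 1 hb']
  have hz_mid : ∀ b : ℕ, m ≤ b → W z 0 b = W y 0 (n + (b - m)) := by
    intro b hb
    have h0 := W_add z 0 m (b - m)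
    rw [(by omega : m + (b - m) = b)] at h0
    rw [h0, hπW m le_rfl, hmdef, List.take_length, hprod, zero_add,
      hz_right (m:ℤ) _ le_rfl]
    have e : (m:ℤ) - m + n = ((0:ℤ) + n) := by ring
    rw [e]
    have h2 := W_add y 0 n (b - m)
    rw [h2]
  -- goodness
  rw [mem_skeleton_iff]
  refine ⟨hletters, ?_⟩
  intro a L hL
  rcases le_or_gt (a + (L:ℤ)) 0 with hC1 | hC1
  · rw [hz_left a L hC1]; exact hyg a L hL
  rcases le_or_gt (m:ℤ) a with hC2 | hC2
  · rw [hz_right a L hC2]; exact hyg _ L hL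
  rcases lt_or_ge a 0 with hC3 | hC3
  · -- a < 0 < a + L, a < m
    have hL₁cast : a + ((-a).toNat : ℤ) = 0 := by omega
    have hLsum : L = (-a).toNat + (a + L).toNat := by omega
    have h1 : W z a L = W y a (-a).toNat * W z 0 ((a + (L:ℤ)).toNat) := by
      have h0 := W_add z a (-a).toNat ((a + (L:ℤ)).toNat)
      rw [hL₁cast, ← hLsum] at h0
      rw [h0, hz_left a (-a).toNat (le_of_eq hL₁cast)]
    have hL₁pos : 1 ≤ (-a).toNat := by omega
    have hL₂pos : 1 ≤ (a + (L:ℤ)).toNat := by omega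
    have hWy1 : W y a (-a).toNat ∈ ESet S := mem_ESet_window hy a hL₁pos
    rcases lt_or_ge (a + (L:ℤ)).toNat m with hc | hc
    · rw [h1, hπW _ (le_of_lt hc)]
      intro heq
      have h2 : (B.take (a + (L:ℤ)).toNat).prod = (W y a (-a).toNat)⁻¹ :=
        eq_inv_of_mul_eq_one_right heq
      exact hπE _ hL₂pos hc (h2 ▸ ESet_inv hsym hWy1)
    · rw [h1, hz_mid _ hc]
      have h4 : W y a ((-a).toNat + (n + ((a + (L:ℤ)).toNat - m)))
          = W y a (-a).toNat * W y 0 (n + ((a + (L:ℤ)).toNat - m)) := by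
        rw [W_add y a (-a).toNat (n + ((a + (L:ℤ)).toNat - m)), hL₁cast]
      rw [← h4]
      exact hyg _ _ (by omega)
  · -- 0 ≤ a < m
    have hacast : ((a.toNat : ℤ)) = a := by omega
    have key : W z 0 (a.toNat + L) = W z 0 a.toNat * W z a L := by
      have h0 := W_add z 0 a.toNat L
      rw [zero_add, hacast] at h0
      exact h0
    have hinv : W z a L = (W z 0 a.toNat)⁻¹ * W z 0 (a.toNat + L) := by
      rw [key, inv_mul_cancel_left]
    rcases le_or_gt (a.toNat + L) m with hc | hc
    · rw [hinv, hπW _ hc, hπW a.toNat (by omega)]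
      intro heq
      have h2 : (B.take a.toNat).prod = (B.take (a.toNat + L)).prod := by
        rwa [inv_mul_eq_one] at heq
      rcases lt_or_eq_of_le hc with hc2 | hc2
      · exact hπinj a.toNat (a.toNat + L) (by omega) hc2 h2
      · rw [hc2, hmdef, List.take_length, hprod] at h2
        rcases Nat.eq_zero_or_pos a.toNat with h0 | h0
        · rw [h0] at h2
          simp only [List.take_zero, List.prod_nil] at h2
          exact hyg 0 n hn h2.symm
        · exact hπE a.toNat h0 (by omega) (h2 ▸ mem_ESet_window hy 0 hn)
    · rw [hinv, hz_mid (a.toNat + L) (by omega), hπW a.toNat (by omega)]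
      intro heq
      have h2 : (B.take a.toNat).prod = W y 0 (n + (a.toNat + L - m)) := by
        rwa [inv_mul_eq_one] at heq
      rcases Nat.eq_zero_or_pos a.toNat with h0 | h0
      · rw [h0] at h2
        simp only [List.take_zero, List.prod_nil] at h2
        exact hyg 0 _ (by omega) h2.symm
      · exact hπE a.toNat h0 (by omega) (h2 ▸ mem_ESet_window hy 0 (by omega))
  
/-- Splicing a single letter `s` into a configuration at the origin. -/
lemma splice {S : Finset G} (hsym : ∀ s ∈ S, s⁻¹ ∈ S) {y : ℤ → G} (hy : y ∈ Skeleton S)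
    {s : G} (hsS : s ∈ S)
    (hcond : ∀ c : ℕ, s * W y 0 c ∉ ESet S ∧ s * W y 0 c ≠ 1) :
    (fun t : ℤ => if t < 0 then y t else if t = 0 then s else y (t - 1)) ∈ Skeleton S := by
  set z : ℤ → G := fun t : ℤ => if t < 0 then y t else if t = 0 then s else y (t - 1) with hzdef
  have hy' := (mem_skeleton_iff S y).mp hy
  have hyg := hy'.2
  have hletters : ∀ t, z t ∈ S := by
    intro t
    by_cases h1 : t < 0
    · simp only [hzdef, if_pos h1]; exact hy'.1 t
    · by_cases h2 : t = 0
      · simp only [hzdef, if_neg h1, if_pos h2]; exact hsS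
      · simp only [hzdef, if_neg h1, if_neg h2]; exact hy'.1 _
  have hz_left : ∀ (a : ℤ) (L : ℕ), a + L ≤ 0 → W z a L = W y a L := by
    intro a L h
    apply W_congr
    intro k hk
    have hneg : a + k < 0 := by omega
    simp only [hzdef, if_pos hneg]
  have hz_right : ∀ (a : ℤ) (L : ℕ), 1 ≤ a → W z a L = W y (a - 1) L := by
    intro a L h
    have h1 : W z a L = W (fun t => y (t + (-1 : ℤ))) a L := by
      apply W_congr
      intro k hk
      have h2 : ¬ (a + k < 0) := by omega
      have h3 : ¬ (a + k = 0) := by omega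
      have e : a + (k:ℤ) - 1 = a + k + (-1) := by ring
      simp only [hzdef, if_neg h2, if_neg h3, e]
    rw [h1, W_shift]
    have e2 : a + (-1:ℤ) = a - 1 := by ring
    rw [e2]
  have hz_mid : ∀ b : ℕ, 1 ≤ b → W z 0 b = s * W y 0 (b - 1) := by
    intro b hb
    have h0 := W_add z 0 1 (b - 1)
    rw [(by omega : 1 + (b - 1) = b), zero_add, Nat.cast_one] at h0
    have e0 : W z 0 1 = s := by
      rw [W_one]
      show (if (0:ℤ) < 0 then y 0 else if (0:ℤ) = 0 then s else y (0-1)) = s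
      norm_num
    rw [h0, e0, hz_right 1 _ le_rfl]
    norm_num
  rw [mem_skeleton_iff]
  refine ⟨hletters, ?_⟩
  intro a L hL
  rcases le_or_gt (a + (L:ℤ)) 0 with hC1 | hC1
  · rw [hz_left a L hC1]; exact hyg a L hL
  rcases le_or_gt 1 a with hC2 | hC2
  · rw [hz_right a L hC2]; exact hyg _ L hL
  rcases lt_or_ge a 0 with hC3 | hC3
  · have hL₁cast : a + ((-a).toNat : ℤ) = 0 := by omega
    have hLsum : L = (-a).toNat + (a + L).toNat := by omega
    have h1 : W z a L = W y a (-a).toNat * W z 0 ((a + (L:ℤ)).toNat) := by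
      have h0 := W_add z a (-a).toNat ((a + (L:ℤ)).toNat)
      rw [hL₁cast, ← hLsum] at h0
      rw [h0, hz_left a (-a).toNat (le_of_eq hL₁cast)]
    have hL₁pos : 1 ≤ (-a).toNat := by omega
    have hL₂pos : 1 ≤ (a + (L:ℤ)).toNat := by omega
    rw [h1, hz_mid _ hL₂pos]
    intro heq
    have h2 : s * W y 0 ((a + (L:ℤ)).toNat - 1) = (W y a (-a).toNat)⁻¹ :=
      eq_inv_of_mul_eq_one_right heq
    exact (hcond ((a + (L:ℤ)).toNat - 1)).1
      (h2 ▸ ESet_inv hsym (mem_ESet_window hy a hL₁pos))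
  · have ha0 : a = 0 := by omega
    rw [ha0, hz_mid L hL]
    exact (hcond (L-1)).2

end SkelAux
namespace SkelAux

open scoped Pointwise

variable {G : Type*} [Group G]

lemma isClosed_letters [TopologicalSpace G] [DiscreteTopology G] (S' : Finset G) :
    IsClosed {x : ℤ → G | ∀ i, x i ∈ S'} := by
  have h : {x : ℤ → G | ∀ i, x i ∈ S'} = ⋂ (i : ℤ), (fun x : ℤ → G => x i) ⁻¹' (S' : Set G) := by
    ext x; simp [Set.mem_iInter]
  rw [h]
  exact isClosed_iInter fun i => (isClosed_discrete _).preimage (continuous_apply i)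

lemma continuous_W [TopologicalSpace G] [DiscreteTopology G] (L : ℕ) (i : ℤ) :
    Continuous fun x : ℤ → G => W x i L := by
  haveI : ContinuousMul G := ⟨continuous_of_discreteTopology⟩
  induction L generalizing i with
  | zero =>
      have h : (fun x : ℤ → G => W x i 0) = fun _ => (1:G) := by
        funext x; exact W_zero x i
      rw [h]; exact continuous_const
  | succ L ih =>
      have h : (fun x : ℤ → G => W x i (L+1)) = fun x => x i * W x (i+1) L := by
        funext x; rw [W_succ_left]
      rw [h]
      exact (continuous_apply i).mul (ih (i+1))

lemma isClosed_W_ne [TopologicalSpace G] [DiscreteTopology G] (i : ℤ) (L : ℕ) :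
    IsClosed {x : ℤ → G | W x i L ≠ 1} := by
  have h : {x : ℤ → G | W x i L ≠ 1} = (fun x : ℤ → G => W x i L) ⁻¹' ({(1:G)}ᶜ) := rfl
  rw [h]
  exact (isClosed_discrete _).preimage (continuous_W L i)

/-- The skeleton is closed in the configuration topology. -/
lemma isClosed_skeleton (S' : Finset G) :
    @IsClosed (ℤ → G) (configTopology G) (Skeleton S') := by
  letI : TopologicalSpace G := ⊥
  haveI : DiscreteTopology G := ⟨rfl⟩
  show IsClosed (Skeleton S')
  have h : Skeleton S' = {x : ℤ → G | ∀ i, x i ∈ S'} ∩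
      ⋂ (i : ℤ), ⋂ (L : ℕ), ⋂ (_ : 1 ≤ L), {x : ℤ → G | W x i L ≠ 1} := by
    ext x
    rw [mem_skeleton_iff]
    simp only [Set.mem_inter_iff, Set.mem_iInter, Set.mem_setOf_eq]
  rw [h]
  exact (isClosed_letters S').inter
    (isClosed_iInter fun i => isClosed_iInter fun L => isClosed_iInter fun _ =>
      isClosed_W_ne i L)

/-- If the skeleton of `S` is minimal and the skeleton of `S' ⊆ S` is nonempty then
the two skeletons coincide. -/
lemma skeleton_eq_of_subset {S S' : Finset G} (hsub : S' ⊆ S)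
    (hmin : IsMinimalSubshift (Skeleton S)) (hne : (Skeleton S').Nonempty) :
    Skeleton S = Skeleton S' := by
  have hsubset : Skeleton S' ⊆ Skeleton S := by
    intro x hx
    rw [mem_skeleton_iff] at hx ⊢
    exact ⟨fun i => hsub (hx.1 i), hx.2⟩
  have hinv : ∀ x ∈ Skeleton S', shiftMap x ∈ Skeleton S' := by
    intro x hx
    exact skeleton_shift hx 1
  exact (hmin.2 _ hsubset (isClosed_skeleton S') hinv hne).symm

/-- Lists all of whose nonempty contiguous sublists evaluate nontrivially. -/
def GoodList (S' : Finset G) (u : List G) : Prop :=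
  (∀ a ∈ u, a ∈ S') ∧
    ∀ (a L : ℕ), 1 ≤ L → a + L ≤ u.length → ((u.drop a).take L).prod ≠ 1

lemma one_mem_finset_pow [DecidableEq G] {T : Finset G} (hT : (1:G) ∈ T) :
    ∀ N : ℕ, (1:G) ∈ T ^ N := by
  intro N
  induction N with
  | zero => simp
  | succ N ih =>
      rw [pow_succ]
      simpa using Finset.mul_mem_mul ih hT

lemma list_prod_mem_pow [DecidableEq G] {S' : Finset G} {u : List G} (hu : ∀ a ∈ u, a ∈ S') :
    ∀ N : ℕ, u.length ≤ N → u.prod ∈ (insert (1:G) S') ^ N := by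
  induction u with
  | nil =>
      intro N _
      simpa using one_mem_finset_pow (Finset.mem_insert_self 1 S') N
  | cons a v ih =>
      intro N hN
      have hN1 : 1 ≤ N := by simp at hN; omega
      have h1 : a ∈ insert (1:G) S' := Finset.mem_insert_of_mem (hu a (by simp))
      have h2 : v.prod ∈ (insert (1:G) S') ^ (N - 1) := by
        apply ih (fun b hb => hu b (by simp [hb]))
        simp at hN; omega
      have h3 : (insert (1:G) S') ^ N = insert (1:G) S' * (insert (1:G) S') ^ (N-1) := by
        rw [← pow_succ']
        congr 1
        omega
      rw [List.prod_cons, h3]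
      exact Finset.mul_mem_mul h1 h2

lemma exists_rep_list {S' : Finset G} (hsym' : ∀ s ∈ S', s⁻¹ ∈ S') {g : G}
    (hg : g ∈ Subgroup.closure (S' : Set G)) :
    ∃ u : List G, (∀ a ∈ u, a ∈ S') ∧ u.prod = g := by
  induction hg using Subgroup.closure_induction with
  | mem x hx => exact ⟨[x], by simpa using hx, by simp⟩
  | one => exact ⟨[], by simp, by simp⟩
  | mul x y hx hy ihx ihy =>
      obtain ⟨u, hu1, hu2⟩ := ihx
      obtain ⟨v, hv1, hv2⟩ := ihy
      refine ⟨u ++ v, ?_, by rw [List.prod_append, hu2, hv2]⟩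
      intro a ha
      rcases List.mem_append.mp ha with h | h
      · exact hu1 a h
      · exact hv1 a h
  | inv x hx ihx =>
      obtain ⟨u, hu1, hu2⟩ := ihx
      refine ⟨(u.map fun b => b⁻¹).reverse, ?_, ?_⟩
      · intro a ha
        rw [List.mem_reverse] at ha
        obtain ⟨b, hb, rfl⟩ := List.mem_map.mp ha
        exact hsym' b (hu1 b hb)
      · rw [← List.prod_inv_reverse, hu2]

/-- If `⟨S'⟩` is infinite then there are good lists over `S'` of every length. -/
lemma exists_goodList {S' : Finset G} (hsym' : ∀ s ∈ S', s⁻¹ ∈ S')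
    (hinf : Infinite (Subgroup.closure (S' : Set G))) (n : ℕ) :
    ∃ u : List G, GoodList S' u ∧ u.length = n := by
  classical
  -- find an element outside the ball of radius n
  obtain ⟨g, hg, hgB⟩ : ∃ g, g ∈ Subgroup.closure (S' : Set G) ∧
      g ∉ (insert (1:G) S') ^ n := by
    by_contra h
    push_neg at h
    have hsub : (Subgroup.closure (S' : Set G) : Set G) ⊆ ↑((insert (1:G) S') ^ n) := by
      intro g hg
      exact h g hg
    have hInf : (Subgroup.closure (S' : Set G) : Set G).Infinite :=
      Set.infinite_coe_iff.mp hinf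
    exact hInf (Set.Finite.subset ((insert (1:G) S') ^ n).finite_toSet hsub)
  -- minimal-length representation
  have hex : ∃ k : ℕ, ∃ u : List G, (∀ a ∈ u, a ∈ S') ∧ u.prod = g ∧ u.length = k := by
    obtain ⟨u, hu1, hu2⟩ := exists_rep_list hsym' hg
    exact ⟨u.length, u, hu1, hu2, rfl⟩
  let k := Nat.find hex
  obtain ⟨u₀, hu₀S, hu₀p, hu₀l⟩ : ∃ u : List G, (∀ a ∈ u, a ∈ S') ∧ u.prod = g ∧
      u.length = k := Nat.find_spec hex
  -- u₀ is long
  have hlong : n ≤ u₀.length := by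
    by_contra h
    push_neg at h
    have hmem : g ∈ (insert (1:G) S') ^ n := by
      rw [← hu₀p]
      exact list_prod_mem_pow hu₀S n (by omega)
    exact hgB hmem
  -- u₀ is good
  have hgood : ∀ (a L : ℕ), 1 ≤ L → a + L ≤ u₀.length → ((u₀.drop a).take L).prod ≠ 1 := by
    intro a L hL hle hprod1
    -- build a shorter representation
    set u' : List G := u₀.take a ++ u₀.drop (a + L) with hu'
    have hu'S : ∀ b ∈ u', b ∈ S' := by
      intro b hb
      rcases List.mem_append.mp hb with h | h
      · exact hu₀S b (List.mem_of_mem_take h)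
      · exact hu₀S b (List.mem_of_mem_drop h)
    have hsplit2 : (u₀.drop a).take L ++ (u₀.drop a).drop L = u₀.drop a :=
      List.take_append_drop L (u₀.drop a)
    have hdd : (u₀.drop a).drop L = u₀.drop (a + L) := by
      rw [List.drop_drop]
    have hu'p : u'.prod = g := by
      have h1 : (u₀.take a).prod * (u₀.drop a).prod = u₀.prod :=
        List.prod_take_mul_prod_drop u₀ a
      have h2 : (u₀.drop a).prod = ((u₀.drop a).take L).prod * (u₀.drop (a+L)).prod := by
        rw [← hdd, ← List.prod_append, hsplit2]
      rw [hu'] at *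
      rw [List.prod_append]
      rw [h2, hprod1, one_mul] at h1
      rw [h1, hu₀p]
    have hu'len : u'.length < u₀.length := by
      rw [hu']
      simp only [List.length_append, List.length_take, List.length_drop]
      omega
    have : ¬ (u'.length < k) := fun hlt => Nat.find_min hex hlt ⟨u', hu'S, hu'p, rfl⟩
    omega
  -- take the prefix of length n
  refine ⟨u₀.take n, ⟨?_, ?_⟩, by simp [hlong]⟩
  · intro a ha; exact hu₀S a (List.mem_of_mem_take ha)
  · intro a L hL hle
    have hlen : (u₀.take n).length = n := by simp [hlong]
    rw [hlen] at hle
    have h1 : ((u₀.take n).drop a).take L = (u₀.drop a).take L := by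
      rw [List.drop_take]
      rw [List.take_take]
      congr 1
      omega
    rw [h1]
    exact hgood a L hL (by omega)

end SkelAux
namespace SkelAux

variable {G : Type*} [Group G]

/-- If `⟨S'⟩` is infinite then the skeleton of `S'` is nonempty (König's lemma). -/
lemma skeleton_nonempty_of_infinite {S' : Finset G} (hsym' : ∀ s ∈ S', s⁻¹ ∈ S')
    (hinf : Infinite (Subgroup.closure (S' : Set G))) : (Skeleton S').Nonempty := by
  classical
  obtain ⟨u1, hu1, hlen1⟩ := exists_goodList hsym' hinf 1
  obtain ⟨a₀, ha₀⟩ : ∃ a, a ∈ S' := by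
    cases u1 with
    | nil => simp at hlen1
    | cons a rest => exact ⟨a, hu1.1 a (by simp)⟩
  letI : TopologicalSpace G := ⊥
  haveI : DiscreteTopology G := ⟨rfl⟩
  set C : ℕ → Set (ℤ → G) := fun N =>
    {x | (∀ i, x i ∈ S') ∧
      ∀ (i : ℤ) (L : ℕ), 1 ≤ L → -(N:ℤ) ≤ i → i + L ≤ (N:ℤ) → W x i L ≠ 1} with hC
  have hdec : ∀ N, C (N+1) ⊆ C N := by
    intro N x hx
    exact ⟨hx.1, fun i L h1 h2 h3 => hx.2 i L h1 (by push_cast; omega) (by push_cast; omega)⟩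
  have hcl : ∀ N, IsClosed (C N) := by
    intro N
    have h : C N = {x : ℤ → G | ∀ i, x i ∈ S'} ∩
        ⋂ (i : ℤ), ⋂ (L : ℕ), ⋂ (_ : 1 ≤ L), ⋂ (_ : -(N:ℤ) ≤ i), ⋂ (_ : i + L ≤ (N:ℤ)),
          {x : ℤ → G | W x i L ≠ 1} := by
      ext x
      simp only [hC, Set.mem_setOf_eq, Set.mem_inter_iff, Set.mem_iInter]
    rw [h]
    exact (isClosed_letters S').inter (isClosed_iInter fun i => isClosed_iInter fun L =>
      isClosed_iInter fun _ => isClosed_iInter fun _ => isClosed_iInter fun _ =>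
        isClosed_W_ne i L)
  have hK : IsCompact {x : ℤ → G | ∀ i, x i ∈ S'} := by
    have h : {x : ℤ → G | ∀ i, x i ∈ S'} = Set.univ.pi (fun _ : ℤ => (S' : Set G)) := by
      ext x; simp [Set.mem_pi]
    rw [h]
    exact isCompact_univ_pi fun i => (S'.finite_toSet).isCompact
  have hcomp0 : IsCompact (C 0) := hK.of_isClosed_subset (hcl 0) (fun x hx => hx.1)
  have hnon : ∀ N, (C N).Nonempty := by
    intro N
    obtain ⟨u, hu, hulen⟩ := exists_goodList hsym' hinf (2*N+1)
    refine ⟨fun t => u.getD (t + N).toNat a₀, ?_, ?_⟩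
    · intro i
      show u.getD (i + N).toNat a₀ ∈ S'
      by_cases h : (i + N).toNat < u.length
      · rw [List.getD_eq_getElem u a₀ h]
        exact hu.1 _ (List.getElem_mem h)
      · rw [List.getD_eq_default u a₀ (by omega)]
        exact ha₀
    · intro i L h1 h2 h3
      have key : ∀ (M : ℕ) (j : ℤ), -(N:ℤ) ≤ j → j + M ≤ (N:ℤ) →
          W (fun t => u.getD (t + N).toNat a₀) j M = ((u.drop (j + N).toNat).take M).prod := by
        intro M
        induction M with
        | zero => intro j _ _; simp
        | succ M ih =>
            intro j hj1 hj2
            have hb : (j + N).toNat + M < u.length := by omega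
            have hdb : M < (u.drop (j + N).toNat).length := by
              rw [List.length_drop]; omega
            rw [W_succ_right, ih j hj1 (by omega), take_succ_prod _ M hdb,
              List.getElem_drop]
            congr 1
            show u.getD ((j + (M:ℤ)) + N).toNat a₀ = _
            have e : ((j + (M:ℤ)) + N).toNat = (j + N).toNat + M := by omega
            rw [e, List.getD_eq_getElem u a₀ hb]
      rw [key L i h2 h3]
      exact hu.2 _ L h1 (by omega)
  obtain ⟨x₀, hx₀⟩ :=
    IsCompact.nonempty_iInter_of_sequence_nonempty_isCompact_isClosed C hdec hnon hcomp0 hcl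
  rw [Set.mem_iInter] at hx₀
  refine ⟨x₀, ?_⟩
  rw [mem_skeleton_iff]
  refine ⟨fun i => (hx₀ 0).1 i, ?_⟩
  intro i L hL
  exact (hx₀ (i.natAbs + L)).2 i L hL (by omega) (by omega)

/-- Window products of a constant configuration are powers. -/
lemma W_const (s : G) (i : ℤ) (L : ℕ) : W (fun _ => s) i L = s ^ L := by
  induction L with
  | zero => simp
  | succ L ih => rw [W_succ_right, ih, pow_succ]

end SkelAux

open SkelAux

/-- If the skeleton of `(G,S)` is minimal, then every proper symmetric subset of
`S` generates a finite subgroup; in particular infinite torsion-free groups never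
have minimal skeletons. -/
theorem minimal_skeleton_proper_subsets (G : Type*) [Group G] :
    (∀ S : Finset G, (∀ s ∈ S, s⁻¹ ∈ S) → (1 : G) ∉ S →
      Subgroup.closure (S : Set G) = ⊤ → IsMinimalSubshift (Skeleton S) →
        ∀ S' : Finset G, S' ⊆ S → S' ≠ S → (∀ s ∈ S', s⁻¹ ∈ S') →
          Finite (Subgroup.closure (S' : Set G))) ∧
    (Infinite G → (∀ g : G, IsOfFinOrder g → g = 1) →
      ∀ S : Finset G, (∀ s ∈ S, s⁻¹ ∈ S) → (1 : G) ∉ S →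
        Subgroup.closure (S : Set G) = ⊤ → ¬ IsMinimalSubshift (Skeleton S)) := by
  constructor
  · -- Part 1
    intro S hsym hS1 _hgen hmin S' hsub hne hsym'
    by_contra hfin
    have hinf : Infinite (Subgroup.closure (S' : Set G)) := not_finite_iff_infinite.mp hfin
    have hne' := skeleton_nonempty_of_infinite hsym' hinf
    have heq := skeleton_eq_of_subset hsub hmin hne'
    obtain ⟨s, hsS, hsS'⟩ : ∃ s, s ∈ S ∧ s ∉ S' := by
      by_contra h
      push_neg at h
      exact hne (Finset.Subset.antisymm hsub h)
    have hs1 : s ≠ 1 := fun h => hS1 (h ▸ hsS)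
    have hsiS : s⁻¹ ∈ S := hsym s hsS
    have hsiS' : s⁻¹ ∉ S' := fun h => hsS' (by simpa using hsym' s⁻¹ h)
    have hNo : ∀ z ∈ Skeleton S, ∀ (t : ℤ) (g : G), g ∉ S' → z t ≠ g := by
      intro z hz t g hg he
      rw [heq, mem_skeleton_iff] at hz
      exact hg (he ▸ hz.1 t)
    -- Step A: letters outside S' are not factor evaluations
    have hstepA : ∀ g : G, g ∈ S → g ∉ S' → g ∉ ESet S := by
      intro g hgS hgS' hgE
      obtain ⟨y, hy, n, hn, hWn⟩ := hgE
      have hz := surgery hsym hy hn (B := [g])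
        (by intro b hb; rw [List.mem_singleton] at hb; rwa [hb])
        (by simp)
        (by simpa using hWn.symm)
        (by intro ρ h1 h2; simp at h2; omega)
        (by intro a b hab hb; simp at hb; omega)
      refine hNo _ hz 0 g hgS' ?_
      show (if (0:ℤ) < 0 then y 0 else if (0:ℤ) < (([g].length : ℕ) : ℤ)
        then [g].getD (0:ℤ).toNat 1 else y (0 - [g].length + n)) = g
      norm_num
    have hsE : s ∉ ESet S := hstepA s hsS hsS'
    have hsiE : s⁻¹ ∉ ESet S := hstepA s⁻¹ hsiS hsiS'
    obtain ⟨x₀, hx₀'⟩ := hne'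
    have hx₀ : x₀ ∈ Skeleton S := by rw [heq]; exact hx₀'
    have hx₀c := (mem_skeleton_iff S x₀).mp hx₀
    have hx₀g := hx₀c.2
    -- Step B: some prefix-translate of s lands in ESet ∪ {1}
    have hQex : ∃ c : ℕ, 1 ≤ c ∧ (s * W x₀ 0 c ∈ ESet S ∨ s * W x₀ 0 c = 1) := by
      by_contra hcon
      push_neg at hcon
      have hcond : ∀ c : ℕ, s * W x₀ 0 c ∉ ESet S ∧ s * W x₀ 0 c ≠ 1 := by
        intro c
        rcases Nat.eq_zero_or_pos c with rfl | hc
        · constructor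
          · simpa using hsE
          · simpa using hs1
        · exact hcon c hc
      have hz := splice hsym hx₀ hsS hcond
      refine hNo _ hz 0 s hsS' ?_
      show (if (0:ℤ) < 0 then x₀ 0 else if (0:ℤ) = 0 then s else x₀ (0-1)) = s
      norm_num
    classical
    have hQc := Nat.find_spec hQex
    set c := Nat.find hQex with hcdef
    have hc1 : 1 ≤ c := hQc.1
    have hQmin : ∀ d, 1 ≤ d → d < c →
        s * W x₀ 0 d ∉ ESet S ∧ s * W x₀ 0 d ≠ 1 := by
      intro d h1 h2
      have hd := Nat.find_min hQex h2
      push_neg at hd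
      exact hd h1
    have hne1 : s * W x₀ 0 c ≠ 1 := by
      intro h
      have h2 : s⁻¹ = W x₀ 0 c := inv_eq_of_mul_eq_one_right h
      exact hsiE (h2 ▸ mem_ESet_window hx₀ 0 hc1)
    have hω : s * W x₀ 0 c ∈ ESet S := hQc.2.resolve_right hne1
    obtain ⟨y, hy, n, hn, hWn⟩ := hω
    -- the block
    set f : ℕ → G := fun k => x₀ (k : ℤ) with hfdef
    set Bk : List G := s :: (List.range c).map f with hBkdef
    have hWf : ∀ ρ : ℕ, W x₀ 0 ρ = ((List.range ρ).map f).prod := by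
      intro ρ
      unfold W
      congr 1
      apply List.map_congr_left
      intro a _
      simp [hfdef]
    have hBklen : Bk.length = c + 1 := by simp [hBkdef]
    have hBtake : ∀ ρ : ℕ, ρ ≤ c → (Bk.take (ρ+1)).prod = s * W x₀ 0 ρ := by
      intro ρ hρ
      rw [hBkdef]
      rw [List.take_succ_cons, List.prod_cons]
      congr 1
      rw [← List.map_take, List.take_range]
      have hmin' : ρ ⊓ c = ρ := by omega
      rw [hmin', hWf]
    have hBfull : Bk.take (c+1) = Bk := by
      rw [← hBklen]
      exact List.take_length
    have hprodBk : Bk.prod = W y 0 n := by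
      calc Bk.prod = (Bk.take (c+1)).prod := by rw [hBfull]
        _ = s * W x₀ 0 c := hBtake c le_rfl
        _ = W y 0 n := hWn.symm
    have hz := surgery hsym hy hn (B := Bk)
      (by
        intro b hb
        rw [hBkdef] at hb
        rcases List.mem_cons.mp hb with rfl | hb2
        · exact hsS
        · obtain ⟨k, _, rfl⟩ := List.mem_map.mp hb2
          have : f k ∈ S' := by rw [hfdef]; exact ((mem_skeleton_iff S' x₀).mp hx₀').1 _
          exact hsub this)
      (by rw [hBklen]; omega)
      hprodBk
      (by
        intro ρ h1 h2
        rw [hBklen] at h2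
        have eρ : ρ = (ρ - 1) + 1 := by omega
        rw [eρ, hBtake (ρ-1) (by omega)]
        rcases Nat.eq_zero_or_pos (ρ-1) with h0 | h0
        · rw [h0]
          simpa using hsE
        · exact (hQmin (ρ-1) h0 (by omega)).1)
      (by
        intro a b hab hb
        rw [hBklen] at hb
        have hbtake := hBtake (b-1) (by omega)
        rw [(by omega : (b-1)+1 = b)] at hbtake
        rcases Nat.eq_zero_or_pos a with rfl | ha
        · rw [List.take_zero, List.prod_nil, hbtake]
          intro h
          rcases Nat.eq_zero_or_pos (b-1) with h0 | h0
          · rw [h0] at h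
            simp at h
            exact hs1 h.symm
          · exact (hQmin (b-1) h0 (by omega)).2 h.symm
        · have hatake := hBtake (a-1) (by omega)
          rw [(by omega : (a-1)+1 = a)] at hatake
          rw [hatake, hbtake]
          intro h
          have h5 : W x₀ 0 (a-1) = W x₀ 0 (b-1) := mul_left_cancel h
          have h3 := W_add x₀ 0 (a-1) (b-a)
          rw [(by omega : (a-1) + (b-a) = b-1), zero_add] at h3
          rw [← h5] at h3
          have h4 : W x₀ ((a-1 : ℕ) : ℤ) (b-a) = 1 := (left_eq_mul.mp h3)
          exact hx₀g _ (b-a) (by omega) h4)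
    refine hNo _ hz 0 s hsS' ?_
    show (if (0:ℤ) < 0 then y 0 else if (0:ℤ) < ((Bk.length : ℕ) : ℤ)
      then Bk.getD (0:ℤ).toNat 1 else y (0 - Bk.length + n)) = s
    rw [if_neg (by omega), if_pos (by rw [hBklen]; push_cast; omega), hBkdef]
    rfl
  · -- Part 2
    intro hG htf S hsym hS1 hgen hmin
    haveI := hG
    obtain ⟨s, hsS⟩ : ∃ s, s ∈ S := by
      by_contra h
      push_neg at h
      have hSempty : S = ∅ := Finset.eq_empty_of_forall_notMem h
      rw [hSempty, Finset.coe_empty, Subgroup.closure_empty] at hgen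
      exact bot_ne_top hgen
    have hpow : ∀ (g : G), g ∈ S → ∀ L : ℕ, 1 ≤ L → g ^ L ≠ 1 := by
      intro g hgS L hL hgL
      have hfo : IsOfFinOrder g := isOfFinOrder_iff_pow_eq_one.mpr ⟨L, by omega, hgL⟩
      exact hS1 ((htf g hfo) ▸ hgS)
    have hconst : ∀ (g : G), g ∈ S → (fun _ : ℤ => g) ∈ Skeleton S := by
      intro g hgS
      rw [mem_skeleton_iff]
      refine ⟨fun _ => hgS, fun i L hL => ?_⟩
      rw [W_const]
      exact hpow g hgS L hL
    have hsing_closed : @IsClosed (ℤ → G) (configTopology G) {fun _ : ℤ => s} := by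
      letI : TopologicalSpace G := ⊥
      haveI : DiscreteTopology G := ⟨rfl⟩
      show IsClosed {fun _ : ℤ => s}
      exact isClosed_singleton
    have hY := hmin.2 {fun _ : ℤ => s}
      (by intro x hx; rw [Set.mem_singleton_iff] at hx; rw [hx]; exact hconst s hsS)
      hsing_closed
      (by intro x hx; rw [Set.mem_singleton_iff] at hx; rw [hx]; rfl)
      ⟨_, rfl⟩
    have hsi : (fun _ : ℤ => s⁻¹) ∈ Skeleton S := hconst s⁻¹ (hsym s hsS)
    rw [← hY, Set.mem_singleton_iff] at hsi
    have hss : s⁻¹ = s := congrFun hsi 0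
    have h4 : s * s = 1 := by
      nth_rewrite 2 [← hss]
      exact mul_inv_cancel s
    have h2 : s ^ 2 = 1 := by rw [pow_two]; exact h4
    exact hpow s hsS 2 (by omega) h2
end

section
/- Let G be a group with finite symmetric generating set S, let c_k be the number of words of length k over S having no factor in WP(G,S), and for each j ∈ ℕ let ρ_j be the number of words of length j in O_{G,S} (the set of words w ∈ WP(G,S) none of whose proper factors lies in WP(G,S)). If β > 1 is a real number such that the series Σ_{j≥0} ρ_j·β^{1−j} converges and |S| − 1 ≥ β + Σ_{j≥0} ρ_j·β^{1−j}, then c_k ≥ β^k for all k ∈ ℕ; in particular the connective constant μ(G,S) = lim_k c_k^{1/k} satisfies μ(G,S) ≥ β. -/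
open Filter

/-- Self-avoiding polygons: words of `WP G S` none of whose proper factors lies
in `WP G S`. -/
def IsSAP {G : Type*} [Group G] (S : Finset G) (w : List G) : Prop :=
  WP S w ∧ ∀ v : List G, v <:+: w → v ≠ w → ¬ WP S v

/-- The number of self-avoiding polygons of length `j`. -/
noncomputable def sapCount {G : Type*} [Group G] (S : Finset G) (j : ℕ) : ℕ :=
  Nat.card {w : List G // w.length = j ∧ IsSAP S w}

/-- The number of words of length `k` over `S` with no factor in `WP G S`
(i.e., the number of self-avoiding walks of length `k`). -/
noncomputable def sawCount {G : Type*} [Group G] (S : Finset G) (k : ℕ) : ℕ :=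
  Nat.card {w : List G // WordIn S w ∧ w.length = k ∧
    ∀ v : List G, v <:+: w → ¬ WP S v}

section Rosenfeld

variable {G : Type*} [Group G]


lemma infix_concat_cases {v w : List G} {a : G} (h : v <:+: w ++ [a]) :
    v <:+ w ++ [a] ∨ v <:+: w := by
  obtain ⟨s, t, hst⟩ := h
  rcases List.eq_nil_or_concat t with rfl | ⟨t', b, rfl⟩
  · left; exact ⟨s, by simpa using hst⟩
  · right
    have h2 : (s ++ v ++ t') ++ [b] = w ++ [a] := by
      simpa [List.concat_eq_append, List.append_assoc] using hst
    exact ⟨s, t', by simpa using (List.append_inj' h2 rfl).1⟩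

lemma exLen {S : Finset G} {w' : List G} (h : ∃ v, v <:+ w' ∧ WP S v) :
    ∃ n, ∃ v : List G, v <:+ w' ∧ WP S v ∧ v.length = n :=
  ⟨h.choose.length, h.choose, h.choose_spec.1, h.choose_spec.2, rfl⟩

open scoped Classical

section
variable {S : Finset G} {k : ℕ} {w : List G} {a : G}

lemma find_ge_one (h : ∃ v : List G, v <:+ (w ++ [a]) ∧ WP S v) : 1 ≤ Nat.find (exLen h) := by
  have hs := (Nat.find_spec (exLen h)).choose_spec
  have h0 : (Nat.find_spec (exLen h)).choose ≠ [] := hs.2.1.2.1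
  have := List.length_pos_iff.mpr h0
  omega

lemma find_lt (h : ∃ v : List G, v <:+ (w ++ [a]) ∧ WP S v) (hw : WordIn S w ∧ w.length = k ∧ ∀ v : List G, v <:+: w → ¬ WP S v) :
    Nat.find (exLen h) < k + 2 := by
  have hs := (Nat.find_spec (exLen h)).choose_spec
  have hle := hs.1.length_le
  rw [List.length_append, List.length_singleton, hw.2.1] at hle
  omega

lemma take_is_saw (hw : WordIn S w ∧ w.length = k ∧ ∀ v : List G, v <:+: w → ¬ WP S v)
    (h : ∃ v : List G, v <:+ (w ++ [a]) ∧ WP S v) :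
    WordIn S ((w ++ [a]).take (k+1-Nat.find (exLen h))) ∧
    ((w ++ [a]).take (k+1-Nat.find (exLen h))).length = k+1-Nat.find (exLen h) ∧
    ∀ v : List G, v <:+: (w ++ [a]).take (k+1-Nat.find (exLen h)) → ¬ WP S v := by
  have h1 := find_ge_one h
  set j := Nat.find (exLen h) with hj
  have hm : k + 1 - j ≤ w.length := by omega
  have hts : (w ++ [a]).take (k+1-j) = w.take (k+1-j) :=
    List.take_append_of_le_length hm
  rw [hts]
  refine ⟨fun b hb => hw.1 b (List.take_subset _ _ hb), ?_, fun v hv => ?_⟩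
  · rw [List.length_take]; omega
  · exact hw.2.2 v (hv.trans (List.take_prefix _ _).isInfix)

lemma choose_is_sap (hw : WordIn S w ∧ w.length = k ∧ ∀ v : List G, v <:+: w → ¬ WP S v)
    (h : ∃ v : List G, v <:+ (w ++ [a]) ∧ WP S v) :
    ((Nat.find_spec (exLen h)).choose).length = Nat.find (exLen h) ∧
    IsSAP S ((Nat.find_spec (exLen h)).choose) := by
  have hs := (Nat.find_spec (exLen h)).choose_spec
  refine ⟨hs.2.2, hs.2.1, fun v' hinf hne hwp => ?_⟩
  rcases infix_concat_cases (hinf.trans hs.1.isInfix) with hsuf | hinw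
  · have hge : Nat.find (exLen h) ≤ v'.length :=
      Nat.find_min' (exLen h) ⟨v', hsuf, hwp, rfl⟩
    have hle : v'.length ≤ ((Nat.find_spec (exLen h)).choose).length := hinf.length_le
    exact hne (hinf.eq_of_length (by omega))
  · exact hw.2.2 v' hinw hwp

lemma good_is_saw (hw : WordIn S w ∧ w.length = k ∧ ∀ v : List G, v <:+: w → ¬ WP S v)
    (ha : a ∈ S) (hng : ¬ ∃ v : List G, v <:+ (w ++ [a]) ∧ WP S v) :
    WordIn S (w ++ [a]) ∧ (w ++ [a]).length = k + 1 ∧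
    ∀ v : List G, v <:+: w ++ [a] → ¬ WP S v := by
  refine ⟨?_, by simp [hw.2.1], fun v hv hwp => ?_⟩
  · intro b hb
    rcases List.mem_append.mp hb with hb | hb
    · exact hw.1 b hb
    · simpa using (List.mem_singleton.mp hb) ▸ ha
  · rcases infix_concat_cases hv with hsuf | hinw
    · exact hng ⟨v, hsuf, hwp⟩
    · exact hw.2.2 v hinw hwp

end

def SAWt (S : Finset G) (k : ℕ) :=
  {w : List G // WordIn S w ∧ w.length = k ∧ ∀ v : List G, v <:+: w → ¬ WP S v}

def SAPt (S : Finset G) (j : ℕ) := {w : List G // w.length = j ∧ IsSAP S w}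

noncomputable def extMap (S : Finset G) (k : ℕ) (w : List G)
    (hw : WordIn S w ∧ w.length = k ∧ ∀ v : List G, v <:+: w → ¬ WP S v)
    (a : G) (ha : a ∈ S) :
    SAWt S (k+1) ⊕ ((j : Fin (k+2)) × (SAWt S (k+1-(j:ℕ)) × SAPt S (j:ℕ))) :=
  if h : ∃ v : List G, v <:+ (w ++ [a]) ∧ WP S v then
    Sum.inr ⟨⟨Nat.find (exLen h), find_lt h hw⟩,
      ⟨⟨(w ++ [a]).take (k+1-Nat.find (exLen h)), take_is_saw hw h⟩,
       ⟨(Nat.find_spec (exLen h)).choose, choose_is_sap hw h⟩⟩⟩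
  else
    Sum.inl ⟨w ++ [a], good_is_saw hw ha h⟩

lemma suffix_take_append {v w : List G} (h : v <:+ w) :
    w.take (w.length - v.length) ++ v = w := by
  obtain ⟨t, rfl⟩ := h
  rw [List.length_append, Nat.add_sub_cancel, List.take_left]

lemma take_append_choose (S : Finset G) (k : ℕ) (w : List G) (a : G)
    (h : ∃ v : List G, v <:+ (w ++ [a]) ∧ WP S v) (hlen : w.length = k) :
    (w ++ [a]).take (k+1-Nat.find (exLen h)) ++ (Nat.find_spec (exLen h)).choose
      = w ++ [a] := by
  have hs := (Nat.find_spec (exLen h)).choose_spec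
  have ht := suffix_take_append hs.1
  rw [List.length_append, List.length_singleton, hlen, hs.2.2] at ht
  exact ht

lemma extMap_inj (S : Finset G) (k : ℕ) :
    Function.Injective (fun p : SAWt S k × {x : G // x ∈ S} =>
      extMap S k p.1.1 p.1.2 p.2.1 p.2.2) := by
  rintro ⟨⟨w, hw⟩, ⟨a, ha⟩⟩ ⟨⟨w', hw'⟩, ⟨a', ha'⟩⟩ hpq
  simp only [extMap] at hpq
  have heq : w ++ [a] = w' ++ [a'] := by
    split_ifs at hpq with h h'
    · have hx := congrArg
        (fun x : ((j : Fin (k+2)) × (SAWt S (k+1-(j:ℕ)) × SAPt S (j:ℕ))) =>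
          (x.2.1.1, x.2.2.1)) (Sum.inr_injective hpq)
      simp only [Prod.mk.injEq] at hx
      rw [← take_append_choose S k w a h hw.2.1,
        ← take_append_choose S k w' a' h' hw'.2.1, hx.1, hx.2]
    all_goals try simp only [Sum.inl.injEq, reduceCtorEq] at hpq
    all_goals first
      | exact hpq.elim
      | exact congrArg Subtype.val (Sum.inl_injective hpq)
  have hlen : w.length = w'.length := by rw [hw.2.1, hw'.2.1]
  obtain ⟨h1, h2⟩ := List.append_inj heq hlen
  simp only [List.cons.injEq] at h2
  exact Prod.ext (Subtype.ext h1) (Subtype.ext h2.1)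

lemma finite_len (S : Finset G) (n : ℕ) :
    {w : List G | WordIn S w ∧ w.length = n}.Finite := by
  induction n with
  | zero =>
      apply Set.Finite.subset (Set.finite_singleton ([] : List G))
      rintro w ⟨-, h⟩
      simpa using List.length_eq_zero_iff.mp h
  | succ n ih =>
      apply Set.Finite.subset (Set.Finite.image2 List.cons S.finite_toSet ih)
      rintro w ⟨hww, hl⟩
      match w with
      | [] => simp at hl
      | a :: t =>
          exact ⟨a, hww a (by simp), t,
            ⟨fun b hb => hww b (List.mem_cons_of_mem _ hb), Nat.succ_injective hl⟩, rfl⟩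

instance SAWt.finite (S : Finset G) (k : ℕ) : Finite (SAWt S k) :=
  Set.Finite.to_subtype <| (finite_len S k).subset fun w hw => ⟨hw.1, hw.2.1⟩

instance SAPt.finite (S : Finset G) (j : ℕ) : Finite (SAPt S j) :=
  Set.Finite.to_subtype <| (finite_len S j).subset fun w hw => ⟨hw.2.1.1, hw.1⟩

lemma sawCount_eq (S : Finset G) (k : ℕ) : sawCount S k = Nat.card (SAWt S k) := rfl
lemma sapCount_eq (S : Finset G) (j : ℕ) : sapCount S j = Nat.card (SAPt S j) := rfl

lemma key_count (S : Finset G) (k : ℕ) :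
    sawCount S k * S.card ≤
      sawCount S (k+1) + ∑ j ∈ Finset.range (k+2), sawCount S (k+1-j) * sapCount S j := by
  classical
  letI : ∀ n, Fintype (SAWt S n) := fun n => Fintype.ofFinite _
  letI : ∀ n, Fintype (SAPt S n) := fun n => Fintype.ofFinite _
  have hle := Nat.card_le_card_of_injective _ (extMap_inj S k)
  rw [Nat.card_prod, Nat.card_sum] at hle
  have h1 : Nat.card {x : G // x ∈ S} = S.card := Nat.card_eq_finsetCard S
  rw [h1] at hle
  have h2 : Nat.card ((j : Fin (k+2)) × (SAWt S (k+1-(j:ℕ)) × SAPt S (j:ℕ)))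
      = ∑ j ∈ Finset.range (k+2), sawCount S (k+1-j) * sapCount S j := by
    rw [Nat.card_eq_fintype_card, Fintype.card_sigma,
      ← Fin.sum_univ_eq_sum_range (fun j => sawCount S (k+1-j) * sapCount S j) (k+2)]
    congr 1
    ext j
    rw [Fintype.card_prod, sawCount_eq, sapCount_eq,
      Nat.card_eq_fintype_card, Nat.card_eq_fintype_card]
  rw [sawCount_eq S k, sawCount_eq S (k+1), ← h2]
  exact hle

lemma sawCount_zero (S : Finset G) : sawCount S 0 = 1 := by
  rw [sawCount_eq]
  have : Unique (SAWt S 0) :=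
    { default := ⟨[], fun a ha => absurd ha List.not_mem_nil, rfl,
        fun v hv hwp => hwp.2.1 (List.infix_nil.mp hv)⟩,
      uniq := fun w => Subtype.ext (List.length_eq_zero_iff.mp w.2.2.1) }
  exact Nat.card_unique

lemma sapCount_zero (S : Finset G) : sapCount S 0 = 0 := by
  rw [sapCount_eq]
  have : IsEmpty (SAPt S 0) := ⟨fun w => w.2.2.1.2.1 (List.length_eq_zero_iff.mp w.2.1)⟩
  exact Nat.card_of_isEmpty

end Rosenfeld

/-- Rosenfeld's counting criterion: if `β > 1` satisfies
`|S| - 1 ≥ β + ∑_j ρ_j β^{1-j}`, then `c_k ≥ β^k` for every `k`, and hence the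
connective constant `μ(G,S) = lim c_k^{1/k}` is at least `β`. -/
theorem rosenfeld_lower_bound {G : Type*} [Group G] (S : Finset G)
    (hsym : ∀ s ∈ S, s⁻¹ ∈ S) (h1 : (1 : G) ∉ S)
    (hgen : Subgroup.closure (S : Set G) = ⊤)
    (β : ℝ) (hβ : 1 < β)
    (hsum : Summable (fun j : ℕ => (sapCount S j : ℝ) * β ^ ((1 : ℤ) - (j : ℤ))))
    (hineq : β + ∑' j : ℕ, (sapCount S j : ℝ) * β ^ ((1 : ℤ) - (j : ℤ)) ≤
      (S.card : ℝ) - 1) :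
    (∀ k : ℕ, β ^ k ≤ (sawCount S k : ℝ)) ∧
      ∀ μ : ℝ,
        Tendsto (fun k : ℕ => (sawCount S k : ℝ) ^ ((k : ℝ)⁻¹)) atTop (nhds μ) →
          β ≤ μ := by
  have hβ0 : (0:ℝ) < β := lt_trans one_pos hβ
  set T := ∑' j : ℕ, (sapCount S j : ℝ) * β ^ ((1 : ℤ) - (j : ℤ)) with hT
  have hterm_nonneg : ∀ j : ℕ, 0 ≤ (sapCount S j : ℝ) * β ^ ((1 : ℤ) - (j : ℤ)) :=
    fun j => mul_nonneg (Nat.cast_nonneg _) (zpow_pos hβ0 _).le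
  have hratio : ∀ k : ℕ, β * (sawCount S k : ℝ) ≤ (sawCount S (k+1) : ℝ) := by
    intro k
    induction k using Nat.strong_induction_on with
    | _ k ih =>
    have chain : ∀ d i : ℕ, i + d = k →
        β ^ d * (sawCount S i : ℝ) ≤ (sawCount S k : ℝ) := by
      intro d
      induction d with
      | zero => intro i hi; simp [← hi]
      | succ d ihd =>
          intro i hi
          have hstep : β * (sawCount S i : ℝ) ≤ (sawCount S (i+1) : ℝ) := ih i (by omega)
          have h2 := ihd (i+1) (by omega)
          calc β ^ (d+1) * (sawCount S i : ℝ) = β ^ d * (β * (sawCount S i : ℝ)) := by ring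
            _ ≤ β ^ d * (sawCount S (i+1) : ℝ) :=
                mul_le_mul_of_nonneg_left hstep (pow_nonneg hβ0.le d)
            _ ≤ _ := h2
    have hkeyR : (sawCount S k : ℝ) * (S.card : ℝ) ≤ (sawCount S (k+1) : ℝ)
        + ∑ j ∈ Finset.range (k+2), (sawCount S (k+1-j) : ℝ) * (sapCount S j : ℝ) := by
      exact_mod_cast key_count S k
    have hbound : ∀ j ∈ Finset.range (k+2),
        (sawCount S (k+1-j) : ℝ) * (sapCount S j : ℝ) ≤
          ((sapCount S j : ℝ) * β ^ ((1:ℤ) - (j:ℤ))) * (sawCount S k : ℝ) := by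
      intro j hj
      rcases Nat.eq_zero_or_pos j with rfl | hj1
      · simp [sapCount_zero]
      · have hd : (k+1-j) + (j-1) = k := by
          have := Finset.mem_range.mp hj; omega
        have hc := chain (j-1) (k+1-j) hd
        have hz : β ^ ((1:ℤ) - (j:ℤ)) = (β ^ (j-1 : ℕ))⁻¹ := by
          rw [← zpow_natCast β (j-1), ← zpow_neg]
          congr 1
          push_cast
          omega
        have hpow : (0:ℝ) < β ^ (j-1:ℕ) := pow_pos hβ0 _
        have h3 : (sawCount S (k+1-j) : ℝ) ≤ (β ^ (j-1:ℕ))⁻¹ * (sawCount S k : ℝ) := by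
          have h4 : (sawCount S (k+1-j) : ℝ) ≤ (sawCount S k : ℝ) / β ^ (j-1:ℕ) :=
            (le_div_iff₀ hpow).mpr (by linarith [hc])
          simpa [div_eq_inv_mul] using h4
        rw [hz]
        calc (sawCount S (k+1-j) : ℝ) * (sapCount S j : ℝ)
            ≤ ((β ^ (j-1:ℕ))⁻¹ * (sawCount S k : ℝ)) * (sapCount S j : ℝ) :=
              mul_le_mul_of_nonneg_right h3 (Nat.cast_nonneg _)
          _ = ((sapCount S j : ℝ) * (β ^ (j-1:ℕ))⁻¹) * (sawCount S k : ℝ) := by ring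
    have hsumle : ∑ j ∈ Finset.range (k+2),
        (sawCount S (k+1-j) : ℝ) * (sapCount S j : ℝ) ≤ T * (sawCount S k : ℝ) := by
      calc ∑ j ∈ Finset.range (k+2), (sawCount S (k+1-j) : ℝ) * (sapCount S j : ℝ)
          ≤ ∑ j ∈ Finset.range (k+2),
              ((sapCount S j : ℝ) * β ^ ((1:ℤ) - (j:ℤ))) * (sawCount S k : ℝ) :=
            Finset.sum_le_sum hbound
        _ = (∑ j ∈ Finset.range (k+2),
              (sapCount S j : ℝ) * β ^ ((1:ℤ) - (j:ℤ))) * (sawCount S k : ℝ) :=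
            (Finset.sum_mul _ _ _).symm
        _ ≤ T * (sawCount S k : ℝ) :=
            mul_le_mul_of_nonneg_right
              (Summable.sum_le_tsum _ (fun i _ => hterm_nonneg i) hsum) (Nat.cast_nonneg _)
    have hS : β + 1 + T ≤ (S.card : ℝ) := by linarith
    have hck0 : (0:ℝ) ≤ (sawCount S k : ℝ) := Nat.cast_nonneg _
    nlinarith [mul_le_mul_of_nonneg_left hS hck0]
  have hpow : ∀ k : ℕ, β ^ k ≤ (sawCount S k : ℝ) := by
    intro k
    induction k with
    | zero => simp [sawCount_zero]
    | succ k ih =>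
        calc β ^ (k+1) = β * β ^ k := by ring
          _ ≤ β * (sawCount S k : ℝ) := mul_le_mul_of_nonneg_left ih hβ0.le
          _ ≤ _ := hratio k
  refine ⟨hpow, fun μ hμ => ?_⟩
  refine ge_of_tendsto hμ ?_
  filter_upwards [eventually_ge_atTop 1] with k hk
  have h1' : β = (β ^ k) ^ ((k:ℝ)⁻¹) :=
    (Real.pow_rpow_inv_natCast hβ0.le (by omega)).symm
  rw [h1']
  exact Real.rpow_le_rpow (pow_nonneg hβ0.le k) (hpow k) (by positivity)
end
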